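/- arXiv:1402.1208 — 5 statements merged into one kernel-verified Lean document; each statement's English description precedes it below -/
import Mathlib

section
/- For every integer n ≥ 2 there exists a constant C > 0, depending only on n, such that for every vector a = (a_1, …, a_n) ∈ ℤ^n there exists a vector h = (h_1, …, h_n) ∈ ℤ^n with 𝔥(h) ≤ C·(1 + (log 𝔥(a))²) (interpreting the bound as C when 𝔥(a) ≤ 1) and gcd(a_i + h_i, a_j + h_j) = 1 for all 1 ≤ i < j ≤ n. Equivalently, L(a) ≪ log² 𝔥(a). -/
/-- The height of an integer vector: `𝔥(x) = max |x_i|`. -/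
def vecHeight {n : ℕ} (x : Fin n → ℤ) : ℕ :=
  Finset.univ.sup fun i => (x i).natAbs

/-!
Put `y = 64 n` and `M = ∏_{p ≤ y} p`. Moving `aᵢ` up to the nearest integer `cᵢ ≡ 1 (mod M)`
removes every prime factor `≤ y` from the candidates `cᵢ + M s`, `s < T`, where `T` is a large
multiple of `1 + log² 𝔥(a)` and `B = 𝔥(a) + M T` bounds all of them. The entries are chosen one at
a time, keeping the invariant `S(b) = ∑_{p ∣ b, p > y} 1/p ≤ 1/(2n)`. A prime `p > y` divides at
most `T/p + 1` candidates, so `S` averages to at most `2T/y + 1 + log B` over them and at most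
`T/16 + 2n(1 + log B)` candidates break the invariant. A candidate sharing a factor with an
earlier entry `b` is divisible by a prime `p > y` of `b`; this rules out at most
`T S(b) + ω(b) ≤ T/(2n) + 2 log B` candidates. Since `T ≥ 10 n (1 + log B)`, one survives.
-/

open Finset Real

theorem Fin.exists_seq_of_forall_extend {α : Type*} {n : ℕ} (P : Fin n → α → Prop)
    (R : α → α → Prop)
    (h : ∀ (k : Fin n) (x : Fin k → α), (∀ j, P (Fin.castLE k.isLt.le j) (x j)) →
      ∃ a, P k a ∧ ∀ j, R (x j) a) :
    ∃ x : Fin n → α, (∀ i, P i (x i)) ∧ ∀ i j, i < j → R (x i) (x j) := by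
  suffices ∀ m (hm : m ≤ n), ∃ x : Fin m → α,
      (∀ i, P (Fin.castLE hm i) (x i)) ∧ ∀ i j, i < j → R (x i) (x j) by
    simpa using this n le_rfl
  intro m
  induction m with
  | zero => exact fun _ => ⟨Fin.elim0, fun i => i.elim0, fun i => i.elim0⟩
  | succ m ih =>
    intro hm
    obtain ⟨x, hxP, hxR⟩ := ih (by omega)
    obtain ⟨a, haP, haR⟩ := h ⟨m, hm⟩ x hxP
    refine ⟨Fin.snoc x a, fun i => ?_, fun i j hij => ?_⟩
    · induction i using Fin.lastCases with
      | last => rw [Fin.snoc_last]; exact haP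
      | cast i => simpa using hxP i
    · induction j using Fin.lastCases with
      | last =>
        obtain ⟨i, rfl⟩ := Fin.exists_castSucc_eq.mpr hij.ne
        simpa using haR i
      | cast j =>
        obtain ⟨i, rfl⟩ := Fin.exists_castSucc_eq.mpr (hij.trans (Fin.castSucc_lt_last j)).ne
        simpa using hxR i j (by simpa using hij)

theorem card_filter_dvd_add_mul_le {p : ℕ} {m : ℤ} (hpm : IsCoprime (p : ℤ) m) (c : ℤ)
    (T : ℕ) :
    #{s ∈ range T | (p : ℤ) ∣ c + m * ((s : ℕ) : ℤ)} ≤ T / p + 1 := by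
  refine (card_le_card_of_injOn (· / p) (t := range (T / p + 1)) ?_ ?_).trans_eq (card_range _)
  · intro s hs
    simp only [coe_filter, mem_range, Set.mem_ofPred_eq, coe_range, Set.mem_Iio] at hs ⊢
    exact Nat.lt_succ_of_le (Nat.div_le_div_right hs.1.le)
  · intro s₁ hs₁ s₂ hs₂ hdiv
    simp only [coe_filter, mem_range, Set.mem_ofPred_eq] at hs₁ hs₂
    have hmul : (p : ℤ) ∣ m * (s₁ - s₂) := by
      simpa [mul_sub] using dvd_sub hs₁.2 hs₂.2
    have hmod : s₂ % p = s₁ % p := Nat.modEq_iff_dvd.mpr (hpm.dvd_of_dvd_mul_left hmul)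
    rw [← Nat.div_add_mod s₁ p, ← Nat.div_add_mod s₂ p, hmod]
    simp_all

theorem cast_card_filter_dvd_add_mul_le {p : ℕ} {m : ℤ} (hpm : IsCoprime (p : ℤ) m) (c : ℤ)
    (T : ℕ) : (#{s ∈ range T | (p : ℤ) ∣ c + m * ((s : ℕ) : ℤ)} : ℝ) ≤ T / p + 1 :=
  (Nat.cast_le.mpr (card_filter_dvd_add_mul_le hpm c T)).trans <| by
    push_cast; gcongr; exact Nat.cast_div_le

theorem card_primeFactors_le_two_mul_log (b : ℕ) : (#b.primeFactors : ℝ) ≤ 2 * log b := by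
  rcases b.eq_zero_or_pos with rfl | hb
  · simp
  have hpow : (2 : ℝ) ^ #b.primeFactors ≤ b := by
    exact_mod_cast
      (pow_card_le_prod _ _ _ fun p hp => (Nat.prime_of_mem_primeFactors hp).two_le).trans
        (Nat.le_of_dvd hb b.prod_primeFactors_dvd)
  have := log_le_log (by positivity) hpow
  rw [log_pow] at this
  nlinarith [log_two_gt_d9, Nat.cast_nonneg (α := ℝ) #b.primeFactors]

noncomputable def sumInvPrimeFactorsAbove (y : ℕ) (b : ℤ) : ℝ :=
  ∑ p ∈ b.natAbs.primeFactors with y < p, (p : ℝ)⁻¹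

theorem sumInvPrimeFactorsAbove_nonneg (y : ℕ) (b : ℤ) : 0 ≤ sumInvPrimeFactorsAbove y b :=
  sum_nonneg fun _ _ => by positivity

theorem sumInvPrimeFactorsAbove_le_sum_ite {y B : ℕ} {b : ℤ} (hb : b.natAbs ≤ B) :
    sumInvPrimeFactorsAbove y b ≤
      ∑ p ∈ Ioc y B with p.Prime, if (p : ℤ) ∣ b then (p : ℝ)⁻¹ else 0 := by
  rw [← sum_filter]
  refine sum_le_sum_of_subset_of_nonneg (fun p hp => ?_) fun _ _ _ => by positivity
  simp only [mem_filter, Nat.mem_primeFactors, mem_Ioc] at hp ⊢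
  obtain ⟨⟨hp, hpb, hb0⟩, hyp⟩ := hp
  exact ⟨⟨⟨hyp, (Nat.le_of_dvd (Nat.pos_of_ne_zero hb0) hpb).trans hb⟩, hp⟩,
    Int.natCast_dvd.mpr hpb⟩

theorem sum_range_sumInvPrimeFactorsAbove_le {y B T : ℕ} {m c : ℤ}
    (hm : ∀ p : ℕ, p.Prime → y < p → IsCoprime (p : ℤ) m)
    (hB : ∀ s < T, (c + m * s).natAbs ≤ B) :
    ∑ s ∈ range T, sumInvPrimeFactorsAbove y (c + m * s) ≤
      T * (2 / (y + 1)) + (1 + log B) := by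
  set U := {p ∈ Ioc y B | p.Prime}
  have hsq : ∑ p ∈ U, ((p : ℝ) ^ 2)⁻¹ ≤ 2 / (y + 1) :=
    (sum_le_sum_of_subset_of_nonneg (fun p hp => by simp [U] at hp ⊢; omega)
      fun _ _ _ => by positivity).trans (sum_Ioo_inv_sq_le y (B + 1))
  have hinv : ∑ p ∈ U, (p : ℝ)⁻¹ ≤ 1 + log B := by
    refine le_trans ?_ (harmonic_le_one_add_log B)
    rw [harmonic_eq_sum_Icc]
    push_cast
    exact sum_le_sum_of_subset_of_nonneg (fun p hp => by simp [U] at hp ⊢; omega)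
      fun _ _ _ => by positivity
  calc ∑ s ∈ range T, sumInvPrimeFactorsAbove y (c + m * s)
      ≤ ∑ s ∈ range T, ∑ p ∈ U, if (p : ℤ) ∣ c + m * s then (p : ℝ)⁻¹ else 0 :=
        sum_le_sum fun s hs => sumInvPrimeFactorsAbove_le_sum_ite (hB s (mem_range.mp hs))
    _ = ∑ p ∈ U,
          #{s ∈ range T | (p : ℤ) ∣ c + m * ((s : ℕ) : ℤ)} * (p : ℝ)⁻¹ := by
        rw [sum_comm]
        simp only [sum_ite, sum_const_zero, add_zero, sum_const, nsmul_eq_mul]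
    _ ≤ ∑ p ∈ U, ((T : ℝ) / p + 1) * (p : ℝ)⁻¹ := by
        gcongr with p hp
        simp only [mem_filter, mem_Ioc, U] at hp
        exact cast_card_filter_dvd_add_mul_le (hm p hp.2 hp.1.1) c T
    _ = T * ∑ p ∈ U, ((p : ℝ) ^ 2)⁻¹ + ∑ p ∈ U, (p : ℝ)⁻¹ := by
        rw [mul_sum, ← sum_add_distrib]
        congr 1 with p
        ring
    _ ≤ T * (2 / (y + 1)) + (1 + log B) := by gcongr

theorem card_filter_lt_sumInvPrimeFactorsAbove_le {n y B T : ℕ} {m c : ℤ} (hn : 0 < n)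
    (hy : 64 * n ≤ y) (hm : ∀ p : ℕ, p.Prime → y < p → IsCoprime (p : ℤ) m)
    (hB : ∀ s < T, (c + m * s).natAbs ≤ B) :
    (#{s ∈ range T | 1 / (2 * n) < sumInvPrimeFactorsAbove y (c + m * ((s : ℕ) : ℤ))} : ℝ) ≤
      T / 16 + 2 * n * (1 + log B) := by
  set bad := {s ∈ range T | 1 / (2 * n) < sumInvPrimeFactorsAbove y (c + m * ((s : ℕ) : ℤ))}
  have hy' : 2 * n * (T * (2 / (y + 1) : ℝ)) ≤ T / 16 := by
    have : (64 * n : ℝ) ≤ y := by exact_mod_cast hy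
    rw [show 2 * n * (T * (2 / (y + 1) : ℝ)) = 4 * n * T / (y + 1) by ring,
      div_le_div_iff₀ (by positivity) (by norm_num)]
    nlinarith [Nat.cast_nonneg (α := ℝ) T]
  calc (#bad : ℝ) = 2 * n * (#bad • (1 / (2 * n) : ℝ)) := by rw [nsmul_eq_mul]; field_simp
    _ ≤ 2 * n * ∑ s ∈ bad, sumInvPrimeFactorsAbove y (c + m * s) := by
        gcongr
        exact card_nsmul_le_sum _ _ _ fun s hs => (mem_filter.mp hs).2.le
    _ ≤ 2 * n * ∑ s ∈ range T, sumInvPrimeFactorsAbove y (c + m * s) := by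
        gcongr
        · exact fun s _ _ => sumInvPrimeFactorsAbove_nonneg y _
        · exact filter_subset _ _
    _ ≤ 2 * n * (T * (2 / (y + 1)) + (1 + log B)) := by
        gcongr
        exact sum_range_sumInvPrimeFactorsAbove_le hm hB
    _ ≤ T / 16 + 2 * n * (1 + log B) := by
        linarith [mul_add (2 * n : ℝ) (T * (2 / (y + 1))) (1 + log B)]

theorem card_filter_gcd_ne_one_le {y T : ℕ} {m c b : ℤ}
    (hm : ∀ p : ℕ, p.Prime → y < p → IsCoprime (p : ℤ) m)
    (hc : ∀ (s p : ℕ), p.Prime → (p : ℤ) ∣ c + m * s → y < p) (hb : b ≠ 0) :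
    (#{s ∈ range T | Int.gcd b (c + m * ((s : ℕ) : ℤ)) ≠ 1} : ℝ) ≤
      T * sumInvPrimeFactorsAbove y b + 2 * log b.natAbs := by
  set P := {p ∈ b.natAbs.primeFactors | y < p}
  have hcover : {s ∈ range T | Int.gcd b (c + m * ((s : ℕ) : ℤ)) ≠ 1} ⊆
      P.biUnion fun p => {s ∈ range T | (p : ℤ) ∣ c + m * ((s : ℕ) : ℤ)} := by
    intro s hs
    rw [mem_filter] at hs
    obtain ⟨p, hp, hpg⟩ := Nat.exists_prime_and_dvd hs.2
    have hpb : (p : ℤ) ∣ b := (Int.natCast_dvd_natCast.mpr hpg).trans (Int.gcd_dvd_left _ _)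
    have hps : (p : ℤ) ∣ c + m * s :=
      (Int.natCast_dvd_natCast.mpr hpg).trans (Int.gcd_dvd_right _ _)
    simp only [mem_biUnion, mem_filter, Nat.mem_primeFactors, P]
    exact ⟨p, ⟨⟨hp, Int.natCast_dvd.mp hpb, Int.natAbs_ne_zero.mpr hb⟩, hc s p hp hps⟩,
      hs.1, hps⟩
  calc (#{s ∈ range T | Int.gcd b (c + m * ((s : ℕ) : ℤ)) ≠ 1} : ℝ)
      ≤ ∑ p ∈ P, (#{s ∈ range T | (p : ℤ) ∣ c + m * ((s : ℕ) : ℤ)} : ℝ) := by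
        exact_mod_cast (card_le_card hcover).trans card_biUnion_le
    _ ≤ ∑ p ∈ P, ((T : ℝ) / p + 1) := by
        gcongr with p hp
        simp only [mem_filter, Nat.mem_primeFactors, P] at hp
        exact cast_card_filter_dvd_add_mul_le (hm p hp.1.1 hp.2) c T
    _ = T * sumInvPrimeFactorsAbove y b + #P := by
        simp [sum_add_distrib, sumInvPrimeFactorsAbove, mul_sum, div_eq_mul_inv, P]
    _ ≤ T * sumInvPrimeFactorsAbove y b + 2 * log b.natAbs := by
        gcongr
        exact (Nat.cast_le.mpr (card_le_card (filter_subset _ _))).trans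
          (card_primeFactors_le_two_mul_log _)

theorem lt_of_prime_dvd_of_modEq_one {y p : ℕ} {v : ℤ} (hv : v ≡ 1 [ZMOD primorial y])
    (hp : p.Prime) (hpv : (p : ℤ) ∣ v) : y < p := by
  by_contra! hpy
  have : (p : ℤ) ∣ 1 - v :=
    (Int.natCast_dvd_natCast.mpr (hp.dvd_primorial_iff.mpr hpy)).trans hv.dvd
  exact (Nat.prime_iff_prime_int.mp hp).not_dvd_one (by simpa using dvd_add this hpv)

theorem isCoprime_primorial {y p : ℕ} (hp : p.Prime) (hpy : y < p) :
    IsCoprime (p : ℤ) (primorial y) :=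
  Nat.Coprime.isCoprime (hp.coprime_iff_not_dvd.mpr (by rw [hp.dvd_primorial_iff]; omega))

theorem ne_zero_of_modEq_one {y : ℕ} (hy : 2 ≤ y) {v : ℤ} (hv : v ≡ 1 [ZMOD primorial y]) :
    v ≠ 0 := by
  rintro rfl
  have := lt_of_prime_dvd_of_modEq_one hv Nat.prime_two (dvd_zero _)
  omega

theorem exists_forall_gcd_eq_one_of_card_lt {ι : Type*} [Fintype ι] {n y B T : ℕ} {m c : ℤ}
    (hy : 64 * n ≤ y) (hT : 10 * n * (1 + log B) ≤ T)
    (hm : ∀ p : ℕ, p.Prime → y < p → IsCoprime (p : ℤ) m)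
    (hc : ∀ (s p : ℕ), p.Prime → (p : ℤ) ∣ c + m * s → y < p)
    (hcB : ∀ s < T, (c + m * s).natAbs ≤ B)
    (x : ι → ℤ) (hι : Fintype.card ι < n) (hx0 : ∀ j, x j ≠ 0)
    (hxB : ∀ j, (x j).natAbs ≤ B)
    (hxS : ∀ j, sumInvPrimeFactorsAbove y (x j) ≤ 1 / (2 * n)) :
    ∃ s < T, sumInvPrimeFactorsAbove y (c + m * s) ≤ 1 / (2 * n) ∧
      ∀ j, Int.gcd (x j) (c + m * s) = 1 := by
  set bad₁ :=
    {s ∈ range T | 1 / (2 * n) < sumInvPrimeFactorsAbove y (c + m * ((s : ℕ) : ℤ))}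
  set bad₂ := fun j => {s ∈ range T | Int.gcd (x j) (c + m * ((s : ℕ) : ℤ)) ≠ 1}
  have hn : (1 : ℝ) ≤ n := by exact_mod_cast hι.trans_le' (Nat.zero_le _)
  have hι' : (Fintype.card ι : ℝ) ≤ n - 1 := by
    rw [le_sub_iff_add_le]; exact_mod_cast hι
  have hlogB : 0 ≤ log B := log_natCast_nonneg B
  have hcard₁ : (#bad₁ : ℝ) ≤ T / 16 + 2 * n * (1 + log B) :=
    card_filter_lt_sumInvPrimeFactorsAbove_le (hι.trans_le' (Nat.zero_le _)) hy hm hcB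
  have hcard₂ : ∀ j, (#(bad₂ j) : ℝ) ≤ T / (2 * n) + 2 * log B := fun j => by
    have hlog : log (x j).natAbs ≤ log B :=
      log_le_log (mod_cast Int.natAbs_pos.mpr (hx0 j)) (mod_cast hxB j)
    have := card_filter_gcd_ne_one_le (T := T) hm hc (hx0 j)
    have := mul_le_mul_of_nonneg_left (hxS j) (Nat.cast_nonneg (α := ℝ) T)
    rw [mul_one_div] at this
    linarith
  have hcard : #(bad₁ ∪ univ.biUnion bad₂) < #(range T) := by
    have hsum₂ : ∑ j, (#(bad₂ j) : ℝ) ≤ T / 2 + 2 * n * log B := by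
      calc ∑ j, (#(bad₂ j) : ℝ) ≤ Fintype.card ι * (T / (2 * n) + 2 * log B) := by
            refine (sum_le_sum fun j _ => hcard₂ j).trans_eq ?_
            rw [sum_const, card_univ, nsmul_eq_mul]
        _ ≤ (n - 1) * (T / (2 * n) + 2 * log B) := by gcongr
        _ = T / 2 - T / (2 * n) + (n - 1) * (2 * log B) := by field_simp
        _ ≤ T / 2 + 2 * n * log B := by
            have : (0 : ℝ) ≤ T / (2 * n) := by positivity
            nlinarith
    have hunion :
        (#(bad₁ ∪ univ.biUnion bad₂) : ℝ) ≤ #bad₁ + ∑ j, (#(bad₂ j) : ℝ) :=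
      mod_cast (card_union_le _ _).trans (Nat.add_le_add_left card_biUnion_le _)
    rw [card_range, ← Nat.cast_lt (α := ℝ)]
    nlinarith
  obtain ⟨s, hsT, hs⟩ := exists_mem_notMem_of_card_lt_card hcard
  simp only [mem_union, mem_biUnion, mem_univ, true_and, not_or, not_exists, bad₁, bad₂,
    mem_filter, hsT, not_lt, not_not] at hs
  exact ⟨s, mem_range.mp hsT, hs⟩

theorem exists_modEq_one_forall_gcd_eq_one {ι : Type*} [Fintype ι] {n y B T : ℕ}
    (hy : 64 * n ≤ y) (hT : 10 * n * (1 + log B) ≤ T) {a : ℤ}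
    (haB : a.natAbs + primorial y * T ≤ B)
    (x : ι → ℤ) (hι : Fintype.card ι < n) (hx0 : ∀ j, x j ≠ 0)
    (hxB : ∀ j, (x j).natAbs ≤ B)
    (hxS : ∀ j, sumInvPrimeFactorsAbove y (x j) ≤ 1 / (2 * n)) :
    ∃ b : ℤ, (b ≡ 1 [ZMOD primorial y] ∧ a ≤ b ∧ b < a + primorial y * T ∧
      sumInvPrimeFactorsAbove y b ≤ 1 / (2 * n)) ∧ ∀ j, Int.gcd (x j) b = 1 := by
  set M : ℤ := ((primorial y : ℕ) : ℤ)
  set c := a + (1 - a) % M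
  have hM : 0 < M := Int.natCast_pos.mpr (primorial_pos y)
  have hv : ∀ s : ℕ, c + M * s ≡ 1 [ZMOD M] := fun s => by
    simpa [c] using ((Int.mod_modEq (1 - a) M).add_left a).add
      (Int.modEq_zero_iff_dvd.mpr (dvd_mul_right M s))
  have hwin : ∀ s < T, a ≤ c + M * s ∧ c + M * s < a + M * T := fun s hs => by
    have h₀ := Int.emod_nonneg (1 - a) hM.ne'
    have h₁ := Int.emod_lt_of_pos (1 - a) hM
    have h₂ : M * (s + 1) ≤ M * T := by gcongr; exact_mod_cast hs
    constructor <;> nlinarith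
  have hcB : ∀ s < T, (c + M * s).natAbs ≤ B := fun s hs => by
    have := hwin s hs
    have : ((primorial y * T : ℕ) : ℤ) = M * T := by push_cast; rfl
    omega
  obtain ⟨s, hsT, hsS, hsx⟩ := exists_forall_gcd_eq_one_of_card_lt hy hT
    (fun p hp hpy => isCoprime_primorial hp hpy)
    (fun s p hp => lt_of_prime_dvd_of_modEq_one (hv s) hp)
    hcB x hι hx0 hxB hxS
  exact ⟨c + M * s, ⟨hv s, (hwin s hsT).1, (hwin s hsT).2, hsS⟩, hsx⟩

theorem log_natCast_add_one_le (H : ℕ) : log (H + 1) ≤ 1 + log H := by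
  rcases H.eq_zero_or_pos with rfl | hH
  · simp
  have hH' : (1 : ℝ) ≤ H := by exact_mod_cast hH
  calc log (H + 1) ≤ log (2 * H) := log_le_log (by positivity) (by linarith)
    _ = log 2 + log H := log_mul two_ne_zero (by positivity)
    _ ≤ 1 + log H := by linarith [log_two_lt_d9]

theorem log_le_div_add (x k : ℝ) (hx : 0 < x) (hk : 0 < k) : log x ≤ x / k + k := by
  have h₁ := log_le_sub_one_of_pos (div_pos hx hk)
  have h₂ := log_le_sub_one_of_pos hk
  rw [log_div hx.ne' hk.ne'] at h₁
  linarith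

theorem ten_mul_one_add_log_le {n M H T : ℕ} (hn : 0 < n) (hM : 0 < M)
    (hT : 20 * n * (3 + M + 20 * n) * (1 + log H ^ 2) ≤ T) :
    10 * n * (1 + log (H + M * T : ℕ)) ≤ T := by
  have hn' : (1 : ℝ) ≤ n := by exact_mod_cast hn
  have hM' : (1 : ℝ) ≤ M := by exact_mod_cast hM
  set L := 1 + log H ^ 2
  have hL : 1 ≤ L := by simp only [L]; linarith [sq_nonneg (log H)]
  have hT' : (1 : ℝ) ≤ T :=
    (one_le_mul_of_one_le_of_one_le (by nlinarith) hL).trans hT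
  have hlogB : log (H + M * T : ℕ) ≤ (1 + log H) + log M + log T := by
    calc log (H + M * T : ℕ) ≤ log ((H + 1) * M * T) := by
          push_cast
          have hMT : (1 : ℝ) ≤ M * T := one_le_mul_of_one_le_of_one_le hM' hT'
          exact log_le_log (by positivity) (by nlinarith [Nat.cast_nonneg (α := ℝ) H])
      _ = log (H + 1) + log M + log T := by
          rw [log_mul (by positivity) (by positivity), log_mul (by positivity) (by positivity)]
      _ ≤ (1 + log H) + log M + log T := by gcongr; exact log_natCast_add_one_le H
  have hlogH : 1 + log H ≤ 2 * L := by nlinarith [sq_nonneg (log H - 1)]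
  have hlogM : log M ≤ M := (log_le_sub_one_of_pos (by positivity)).trans (by linarith)
  have hlogT := log_le_div_add T (20 * n) (by positivity) (by positivity)
  calc 10 * n * (1 + log (H + M * T : ℕ))
      ≤ 10 * n * (1 + 2 * L + M + (T / (20 * n) + 20 * n)) :=
        mul_le_mul_of_nonneg_left (by linarith) (by positivity)
    _ = 10 * n * (1 + 2 * L + M + 20 * n) + T / 2 := by field_simp; ring
    _ ≤ 10 * n * ((3 + M + 20 * n) * L) + T / 2 := by
        gcongr
        nlinarith [mul_le_mul_of_nonneg_left hL (by positivity : (0 : ℝ) ≤ M + 20 * n)]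
    _ ≤ T := by linarith

theorem pairwise_coprime_shift_general (n : ℕ) :
    ∃ C : ℝ, 0 < C ∧
      ∀ a : Fin n → ℤ, ∃ h : Fin n → ℤ,
        (vecHeight h : ℝ) ≤ C * (1 + (Real.log (vecHeight a)) ^ 2) ∧
        ∀ i j : Fin n, i < j → Int.gcd (a i + h i) (a j + h j) = 1 := by
  set M := primorial (64 * n)
  set K : ℝ := 20 * n * (3 + M + 20 * n)
  refine ⟨M * (K + 1), mul_pos (by exact_mod_cast primorial_pos _) (by positivity), fun a => ?_⟩
  set L := 1 + log (vecHeight a) ^ 2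
  set T := ⌈K * L⌉₊
  have haH : ∀ i, (a i).natAbs ≤ vecHeight a :=
    fun i => le_sup (f := fun i => (a i).natAbs) (mem_univ i)
  obtain ⟨x, hxP, hxR⟩ := Fin.exists_seq_of_forall_extend
    (fun i b => b ≡ 1 [ZMOD M] ∧ a i ≤ b ∧ b < a i + M * T ∧
      sumInvPrimeFactorsAbove (64 * n) b ≤ 1 / (2 * n))
    (fun b b' => Int.gcd b b' = 1) fun k x hx =>
      exists_modEq_one_forall_gcd_eq_one (B := vecHeight a + M * T) le_rfl
        (ten_mul_one_add_log_le k.pos (primorial_pos _) (Nat.le_ceil _))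
        (Nat.add_le_add_right (haH k) _) x (by simp)
        (fun j => ne_zero_of_modEq_one (by have := k.pos; omega) (hx j).1)
        (fun j => by have := hx j; have := haH (Fin.castLE k.isLt.le j); omega)
        (fun j => (hx j).2.2.2)
  refine ⟨x - a, ?_, fun i j hij => by simpa using hxR i j hij⟩
  have hxa : ∀ i, (x i - a i).natAbs ≤ M * T := fun i => by have := hxP i; omega
  have hL : 1 ≤ L := by simp only [L]; linarith [sq_nonneg (log (vecHeight a))]
  calc (vecHeight (x - a) : ℝ) ≤ M * T := by exact_mod_cast Finset.sup_le fun i _ => hxa i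
    _ ≤ M * (K + 1) * L := by
        rw [mul_assoc]
        gcongr
        linarith [Nat.ceil_lt_add_one (by positivity : 0 ≤ K * L)]

/-- Theorem 2 of the paper: for every `n ≥ 2` there is `C > 0` depending only on `n`
such that every `a ∈ ℤⁿ` admits a shift `h ∈ ℤⁿ` with
`𝔥(h) ≤ C·(1 + (log 𝔥(a))²)` making the shifted entries pairwise coprime;
i.e. `L(a) ≪ log² 𝔥(a)`. -/
theorem pairwise_coprime_shift (n : ℕ) (hn : 2 ≤ n) :
    ∃ C : ℝ, 0 < C ∧
      ∀ a : Fin n → ℤ, ∃ h : Fin n → ℤ,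
        (vecHeight h : ℝ) ≤ C * (1 + (Real.log (vecHeight a)) ^ 2) ∧
        ∀ i j : Fin n, i < j → Int.gcd (a i + h i) (a j + h j) = 1 :=
  pairwise_coprime_shift_general n
end

section
/- For every integer n ≥ 2 there exists a constant C > 0, depending only on n, such that for every vector a = (a_1, …, a_n) ∈ ℤ^n there exists a vector h = (h_1, …, h_n) ∈ ℤ^n with 𝔥(h) ≤ C·(1 + (log 𝔥*(a))²) (interpreting the bound as C when 𝔥*(a) ≤ 1) and gcd(a_i + h_i, a_j + h_j) = 1 for all 1 ≤ i < j ≤ n, where 𝔥*(a) = min_{1 ≤ i ≤ n} max_{1 ≤ j ≤ n, j ≠ i} |a_j|. -/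
/-- `𝔥*(a) = min_{1 ≤ i ≤ n} max_{1 ≤ j ≤ n, j ≠ i} |a_j|`. -/
noncomputable def vecHeightStar {n : ℕ} (a : Fin n → ℤ) : ℕ :=
  sInf (Set.range fun i : Fin n => (Finset.univ.erase i).sup fun j => (a j).natAbs)

open Finset

theorem card_filter_dvd_add_mul_le_s4 {q P : ℕ} (hqP : q.Coprime P) (A : ℤ) (D : ℕ) :
    (#{k ∈ range D | (q : ℤ) ∣ A + P * (k : ℕ)} : ℚ) ≤ D / q + 1 := by
  set S := {k ∈ range D | (q : ℤ) ∣ A + P * (k : ℕ)}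
  have hmod : ∀ k₁ ∈ S, ∀ k₂ ∈ S, k₁ % q = k₂ % q := by
    intro k₁ h₁ k₂ h₂
    have hdvd : (q : ℤ) ∣ (k₁ : ℤ) - k₂ :=
      (Nat.isCoprime_iff_coprime.2 hqP).dvd_of_dvd_mul_right <| by
        convert dvd_sub (mem_filter.1 h₁).2 (mem_filter.1 h₂).2 using 1; ring
    exact (Int.natCast_modEq_iff.1 (Int.modEq_iff_dvd.2 hdvd)).symm
  have hinj : Set.InjOn (· / q) S := fun k₁ h₁ k₂ h₂ hdiv => by
    rw [← Nat.div_add_mod k₁ q, ← Nat.div_add_mod k₂ q, hmod k₁ h₁ k₂ h₂]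
    exact congrArg (q * · + _) hdiv
  have hmaps : ∀ k ∈ S, k / q ∈ range (D / q + 1) := fun k hk =>
    mem_range.2 (Nat.lt_succ_of_le (Nat.div_le_div_right (mem_range.1 (mem_filter.1 hk).1).le))
  have hcard : #S ≤ D / q + 1 := by
    simpa using card_le_card_of_injOn _ hmaps hinj
  calc (#S : ℚ) ≤ ((D / q : ℕ) : ℚ) + 1 := by exact_mod_cast hcard
    _ ≤ D / q + 1 := by gcongr; exact Nat.cast_div_le

theorem card_primeFactors_le_of_lt_two_pow {m M : ℕ} (h : m < 2 ^ (M + 1)) :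
    #m.primeFactors ≤ M := by
  rcases eq_or_ne m 0 with rfl | hm
  · simp
  have : 2 ^ #m.primeFactors < 2 ^ (M + 1) :=
    calc 2 ^ #m.primeFactors ≤ ∏ p ∈ m.primeFactors, p :=
          pow_card_le_prod _ _ _ fun p hp => (Nat.prime_of_mem_primeFactors hp).two_le
      _ ≤ m := Nat.le_of_dvd (Nat.pos_of_ne_zero hm) (Nat.prod_primeFactors_dvd m)
      _ < 2 ^ (M + 1) := h
  exact Nat.lt_succ_iff.1 ((Nat.pow_lt_pow_iff_right (by norm_num)).1 this)

def primeRecipSum (z Y : ℕ) (b : ℤ) : ℚ :=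
  ∑ p ∈ b.natAbs.primeFactors with z < p ∧ p ≤ Y, (p : ℚ)⁻¹

theorem sum_inv_Ioc_le {z : ℕ} (Y : ℕ) (hz : 0 < z) :
    ∑ m ∈ Ioc z Y, (m : ℚ)⁻¹ ≤ Y / z := by
  calc ∑ m ∈ Ioc z Y, (m : ℚ)⁻¹ ≤ #(Ioc z Y) • (z : ℚ)⁻¹ := by
        refine sum_le_card_nsmul _ _ _ fun m hm => ?_
        gcongr
        exact (mem_Ioc.1 hm).1.le
    _ ≤ Y / z := by
        rw [nsmul_eq_mul, Nat.card_Ioc, div_eq_mul_inv]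
        gcongr
        exact_mod_cast Nat.sub_le Y z

theorem sum_inv_sq_Ioc_le {z : ℕ} (Y : ℕ) (hz : 0 < z) :
    ∑ m ∈ Ioc z Y, ((m : ℚ) ^ 2)⁻¹ ≤ (z : ℚ)⁻¹ :=
  calc ∑ m ∈ Ioc z Y, ((m : ℚ) ^ 2)⁻¹ ≤ ∑ m ∈ Ioc z (max z Y), ((m : ℚ) ^ 2)⁻¹ :=
        sum_le_sum_of_subset_of_nonneg (Ioc_subset_Ioc_right (le_max_right z Y))
          fun _ _ _ => by positivity
    _ ≤ (z : ℚ)⁻¹ - ((max z Y : ℕ) : ℚ)⁻¹ := sum_Ioc_inv_sq_le_sub hz.ne' (le_max_left z Y)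
    _ ≤ (z : ℚ)⁻¹ := sub_le_self _ (by positivity)

theorem sum_primeRecipSum_le {z P : ℕ} (hz : 0 < z) (hP : ∀ p, p.Prime → z < p → p.Coprime P)
    (Y : ℕ) (A : ℤ) (D : ℕ) :
    ∑ k ∈ range D, primeRecipSum z Y (A + P * (k : ℕ)) ≤ (D + Y) / z := by
  set B : ℕ → ℤ := fun k => A + P * k
  set PP := {p ∈ Ioc z Y | p.Prime}
  have hpoint (k : ℕ) :
      primeRecipSum z Y (B k) ≤ ∑ p ∈ PP with ((p : ℕ) : ℤ) ∣ B k, (p : ℚ)⁻¹ := by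
    refine sum_le_sum_of_subset_of_nonneg (fun p hp => ?_) fun _ _ _ => by positivity
    obtain ⟨hpB, hzp, hpY⟩ := mem_filter.1 hp
    refine mem_filter.2 ⟨mem_filter.2 ⟨mem_Ioc.2 ⟨hzp, hpY⟩, ?_⟩, ?_⟩
    · exact Nat.prime_of_mem_primeFactors hpB
    · exact Int.natCast_dvd.2 (Nat.dvd_of_mem_primeFactors hpB)
  calc ∑ k ∈ range D, primeRecipSum z Y (B k)
      ≤ ∑ k ∈ range D, ∑ p ∈ PP with ((p : ℕ) : ℤ) ∣ B k, (p : ℚ)⁻¹ :=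
        sum_le_sum fun k _ => hpoint k
    _ = ∑ p ∈ PP, (#{k ∈ range D | (p : ℤ) ∣ B k} : ℚ) * (p : ℚ)⁻¹ := by
        simp only [sum_filter]
        rw [sum_comm]
        simp only [← sum_filter, sum_const, nsmul_eq_mul]
    _ ≤ ∑ p ∈ PP, ((D / p + 1 : ℚ) * (p : ℚ)⁻¹) := by
        refine sum_le_sum fun p hp => ?_
        obtain ⟨hpI, hp⟩ := mem_filter.1 hp
        gcongr
        exact card_filter_dvd_add_mul_le_s4 (hP p hp (mem_Ioc.1 hpI).1) A D
    _ ≤ ∑ m ∈ Ioc z Y, (D * ((m : ℚ) ^ 2)⁻¹ + (m : ℚ)⁻¹) := by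
        refine (sum_le_sum fun p _ => le_of_eq ?_).trans
          (sum_le_sum_of_subset_of_nonneg (filter_subset _ _) fun _ _ _ => by positivity)
        ring
    _ ≤ D * (z : ℚ)⁻¹ + Y / z := by
        rw [sum_add_distrib, ← mul_sum]
        gcongr
        · exact sum_inv_sq_Ioc_le Y hz
        · exact sum_inv_Ioc_le Y hz
    _ = (D + Y) / z := by ring

theorem sum_inv_primeFactors_le {z : ℕ} (Y : ℕ) {v : ℤ}
    (hvz : ∀ p ∈ v.natAbs.primeFactors, z < p) :
    ∑ p ∈ v.natAbs.primeFactors, (p : ℚ)⁻¹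
      ≤ primeRecipSum z Y v + #v.natAbs.primeFactors / (Y + 1) := by
  rw [← sum_filter_add_sum_filter_not _ (fun p : ℕ => p ≤ Y)]
  gcongr
  · exact le_of_eq <| sum_congr (filter_congr fun p hp => by simp [hvz p hp]) fun _ _ => rfl
  · calc ∑ p ∈ v.natAbs.primeFactors with ¬p ≤ Y, (p : ℚ)⁻¹
        ≤ #{p ∈ v.natAbs.primeFactors | ¬p ≤ Y} • ((Y : ℚ) + 1)⁻¹ := by
          refine sum_le_card_nsmul _ _ _ fun p hp => ?_
          have : (Y : ℚ) + 1 ≤ p := by exact_mod_cast Nat.lt_of_not_le (mem_filter.1 hp).2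
          gcongr
      _ ≤ #v.natAbs.primeFactors / (Y + 1) := by
          rw [nsmul_eq_mul, div_eq_mul_inv]
          gcongr
          exact filter_subset _ _

theorem card_filter_gcd_ne_one_le_s4 {z P : ℕ} (hP : ∀ p, p.Prime → z < p → p.Coprime P) (Y : ℕ)
    (A : ℤ) (D : ℕ) {v : ℤ} (hv : v ≠ 0) (hvz : ∀ p ∈ v.natAbs.primeFactors, z < p) :
    (#{k ∈ range D | Int.gcd (A + P * (k : ℕ)) v ≠ 1} : ℚ)
      ≤ D * (primeRecipSum z Y v + #v.natAbs.primeFactors / (Y + 1))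
        + #v.natAbs.primeFactors := by
  set B : ℕ → ℤ := fun k => A + P * k
  set F := v.natAbs.primeFactors
  have hsub : {k ∈ range D | Int.gcd (B k) v ≠ 1}
      ⊆ F.biUnion fun p => {k ∈ range D | (p : ℤ) ∣ B k} := by
    intro k hk
    obtain ⟨hkD, hgcd⟩ := mem_filter.1 hk
    obtain ⟨q, hq, hqd⟩ := Nat.exists_prime_and_dvd hgcd
    have hqB : (q : ℤ) ∣ B k := (Int.natCast_dvd_natCast.2 hqd).trans (Int.gcd_dvd_left _ _)
    have hqv : (q : ℤ) ∣ v := (Int.natCast_dvd_natCast.2 hqd).trans (Int.gcd_dvd_right _ _)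
    exact mem_biUnion.2 ⟨q, Nat.mem_primeFactors.2 ⟨hq, Int.natCast_dvd.1 hqv, by omega⟩,
      mem_filter.2 ⟨hkD, hqB⟩⟩
  calc (#{k ∈ range D | Int.gcd (B k) v ≠ 1} : ℚ)
      ≤ ∑ p ∈ F, (#{k ∈ range D | (p : ℤ) ∣ B k} : ℚ) := by
        exact_mod_cast (card_le_card hsub).trans card_biUnion_le
    _ ≤ ∑ p ∈ F, ((D : ℚ) / p + 1) := by
        refine sum_le_sum fun p hp => card_filter_dvd_add_mul_le_s4 (hP p ?_ (hvz p hp)) A D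
        exact Nat.prime_of_mem_primeFactors hp
    _ = D * ∑ p ∈ F, (p : ℚ)⁻¹ + #F := by
        simp only [sum_add_distrib, mul_sum, div_eq_mul_inv, sum_const, nsmul_eq_mul, mul_one]
    _ ≤ D * (primeRecipSum z Y v + #F / (Y + 1)) + #F := by
        gcongr
        exact sum_inv_primeFactors_le Y hvz

theorem Nat.Prime.coprime_primorial {p z : ℕ} (hp : p.Prime) (h : z < p) :
    p.Coprime (primorial z) :=
  (Nat.Prime.coprime_iff_not_dvd hp).2 fun hd => absurd (hp.dvd_primorial_iff.1 hd) (by omega)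

theorem lt_of_mem_primeFactors_of_primorial_dvd_sub_one {z : ℕ} {v : ℤ}
    (hv : (primorial z : ℤ) ∣ v - 1) {p : ℕ} (hp : p ∈ v.natAbs.primeFactors) : z < p := by
  have hpp := Nat.prime_of_mem_primeFactors hp
  by_contra! hpz
  have hpv : (p : ℤ) ∣ v := Int.natCast_dvd.2 (Nat.dvd_of_mem_primeFactors hp)
  have hp1 : (p : ℤ) ∣ v - 1 :=
    (Int.natCast_dvd_natCast.2 (hpp.dvd_primorial_iff.2 hpz)).trans hv
  have : (p : ℤ) ∣ 1 := by simpa using dvd_sub hpv hp1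
  exact hpp.one_lt.ne' (by exact_mod_cast Int.eq_one_of_dvd_one (by positivity) this)

theorem ne_zero_of_primorial_dvd_sub_one {z : ℕ} (hz : 2 ≤ z) {v : ℤ}
    (hv : (primorial z : ℤ) ∣ v - 1) : v ≠ 0 := by
  rintro rfl
  have h2 : (2 : ℤ) ∣ primorial z := by exact_mod_cast Nat.prime_two.dvd_primorial_iff.2 hz
  have := Int.eq_one_of_dvd_one (by norm_num) (h2.trans (by simpa using hv))
  norm_num at this

def SieveGood (n M : ℕ) (b : ℤ) : Prop :=
  primeRecipSum (32 * n ^ 2) (8 * n * M) b ≤ (4 * n : ℚ)⁻¹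

instance (n M : ℕ) : DecidablePred (SieveGood n M) :=
  fun _ => inferInstanceAs (Decidable (_ ≤ _))

def SieveAdmissible (n M : ℕ) (v : ℤ) : Prop :=
  (primorial (32 * n ^ 2) : ℤ) ∣ v - 1 ∧ #v.natAbs.primeFactors ≤ M ∧ SieveGood n M v

theorem two_le_thirty_two_mul_sq {n : ℕ} (hn : 2 ≤ n) : 2 ≤ 32 * n ^ 2 := by nlinarith

theorem card_filter_not_sieveGood_le {n : ℕ} (hn : 2 ≤ n) (M : ℕ) (A : ℤ) (D : ℕ) :
    (#{k ∈ range D | ¬SieveGood n M (A + primorial (32 * n ^ 2) * (k : ℕ))} : ℚ)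
      ≤ D / (8 * n) + M := by
  set z := 32 * n ^ 2
  set G := {k ∈ range D | ¬SieveGood n M (A + primorial z * (k : ℕ))}
  have hmarkov : #G • (4 * n : ℚ)⁻¹
      ≤ ∑ k ∈ range D, primeRecipSum z (8 * n * M) (A + primorial z * (k : ℕ)) :=
    (card_nsmul_le_sum _ _ _ fun k hk => (not_le.1 (mem_filter.1 hk).2).le).trans
      (sum_le_sum_of_subset_of_nonneg (filter_subset _ _)
        fun _ _ _ => sum_nonneg fun _ _ => by positivity)
  have := hmarkov.trans (sum_primeRecipSum_le (by have := two_le_thirty_two_mul_sq hn; omega)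
    (fun p hp => hp.coprime_primorial) (8 * n * M) A D)
  rw [nsmul_eq_mul] at this
  push_cast [z] at this
  rw [mul_inv_le_iff₀ (by positivity)] at this
  calc _ ≤ _ := this
    _ = D / (8 * n) + M := by field_simp; ring

theorem card_filter_gcd_ne_one_le_of_sieveAdmissible {n M : ℕ} (hn : 2 ≤ n) (A : ℤ) (D : ℕ)
    {v : ℤ} (hv : SieveAdmissible n M v) :
    (#{k ∈ range D | Int.gcd (A + primorial (32 * n ^ 2) * (k : ℕ)) v ≠ 1} : ℚ)
      ≤ 3 * D / (8 * n) + M := by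
  obtain ⟨hv1, hvM, hvG⟩ := hv
  have hvM' : (#v.natAbs.primeFactors : ℚ) ≤ M := by exact_mod_cast hvM
  have hfrac :
      (#v.natAbs.primeFactors : ℚ) / (((8 * n * M : ℕ) : ℚ) + 1) ≤ (8 * n : ℚ)⁻¹ := by
    rw [div_le_iff₀ (by positivity)]
    push_cast
    field_simp
    nlinarith
  calc _ ≤ _ := card_filter_gcd_ne_one_le_s4 (fun p hp => hp.coprime_primorial) (8 * n * M) A D
        (ne_zero_of_primorial_dvd_sub_one (two_le_thirty_two_mul_sq hn) hv1)
        fun p hp => lt_of_mem_primeFactors_of_primorial_dvd_sub_one hv1 hp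
    _ ≤ D * ((4 * n : ℚ)⁻¹ + (8 * n : ℚ)⁻¹) + M := by gcongr; exact hvG
    _ = 3 * D / (8 * n) + M := by field_simp; ring

theorem exists_sieveGood_coprime {n M D : ℕ} (hn : 2 ≤ n) (hD : 2 * (n + 1) * M < D) (A : ℤ)
    (s : Finset ℤ) (hs : #s ≤ n) (hsv : ∀ v ∈ s, SieveAdmissible n M v) :
    ∃ k < D, SieveGood n M (A + primorial (32 * n ^ 2) * (k : ℕ)) ∧
      ∀ v ∈ s, Int.gcd (A + primorial (32 * n ^ 2) * (k : ℕ)) v = 1 := by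
  set B : ℕ → ℤ := fun k => A + primorial (32 * n ^ 2) * k
  set G := {k ∈ range D | ¬SieveGood n M (B k)}
  set C := s.biUnion fun v => {k ∈ range D | Int.gcd (B k) v ≠ 1}
  have hnQ : (2 : ℚ) ≤ n := by exact_mod_cast hn
  have hsQ : (#s : ℚ) ≤ n := by exact_mod_cast hs
  have hDQ : (2 * (n + 1) * M : ℚ) < D := by exact_mod_cast hD
  have hCQ : (#C : ℚ) ≤ n * (3 * D / (8 * n) + M) :=
    calc (#C : ℚ) ≤ ∑ v ∈ s, (#{k ∈ range D | Int.gcd (B k) v ≠ 1} : ℚ) := by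
          exact_mod_cast card_biUnion_le
      _ ≤ #s • (3 * D / (8 * n) + M) := sum_le_card_nsmul _ _ _
          fun v hv => card_filter_gcd_ne_one_le_of_sieveAdmissible hn A D (hsv v hv)
      _ ≤ n * (3 * D / (8 * n) + M) := by rw [nsmul_eq_mul]; gcongr
  have h8n : (D : ℚ) / (8 * n) ≤ D / 16 := by gcongr; linarith
  have hbad : (#(G ∪ C) : ℚ) < #(range D) :=
    calc (#(G ∪ C) : ℚ) ≤ #G + #C := by exact_mod_cast card_union_le G C
      _ ≤ D / (8 * n) + M + n * (3 * D / (8 * n) + M) :=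
          add_le_add (card_filter_not_sieveGood_le hn M A D) hCQ
      _ = D / (8 * n) + 3 * D / 8 + (n + 1) * M := by field_simp; ring
      _ < #(range D) := by rw [card_range]; nlinarith
  obtain ⟨k, hkD, hk⟩ := exists_mem_notMem_of_card_lt_card (by exact_mod_cast hbad)
  simp only [G, C, mem_union, mem_filter, mem_biUnion, not_or, not_and, not_exists, not_not] at hk
  exact ⟨k, mem_range.1 hkD, hk.1 hkD, fun v hv => hk.2 v hv hkD⟩

theorem exists_shift_sieveGood_coprime {n M D : ℕ} (hn : 2 ≤ n) (hD : 2 * (n + 1) * M < D)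
    (a : ℤ) (s : Finset ℤ) (hs : #s ≤ n) (hsv : ∀ v ∈ s, SieveAdmissible n M v) :
    ∃ h : ℤ, 0 ≤ h ∧ h < primorial (32 * n ^ 2) * D ∧
      (primorial (32 * n ^ 2) : ℤ) ∣ a + h - 1 ∧ SieveGood n M (a + h) ∧
      ∀ v ∈ s, Int.gcd (a + h) v = 1 := by
  set P : ℤ := ↑(primorial (32 * n ^ 2))
  have hP : 0 < P := Int.natCast_pos.2 (primorial_pos _)
  set c := (1 - a) % P
  obtain ⟨k, hkD, hgood, hcop⟩ := exists_sieveGood_coprime hn hD (a + c) s hs hsv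
  have hc : 0 ≤ c ∧ c < P := ⟨Int.emod_nonneg _ hP.ne', Int.emod_lt_of_pos _ hP⟩
  have hkD' : (k : ℤ) + 1 ≤ D := by exact_mod_cast hkD
  refine ⟨c + P * k, by nlinarith, by nlinarith, ?_, by rwa [← add_assoc],
    by rwa [← add_assoc]⟩
  rw [show a + (c + P * k) - 1 = P * k - ((1 - a) - c) by ring]
  exact dvd_sub (dvd_mul_right P k) (Int.mod_modEq (1 - a) P).dvd

theorem pairwise_gcd_update_insert {ι : Type*} [DecidableEq ι] {T : Finset ι} {i : ι}
    (hi : i ∉ T) {f : ι → ℤ} (hf : (T : Set ι).Pairwise fun j k => Int.gcd (f j) (f k) = 1) {w : ℤ}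
    (hw : ∀ j ∈ T, Int.gcd w (f j) = 1) :
    ((insert i T : Finset ι) : Set ι).Pairwise
      fun j k => Int.gcd (Function.update f i w j) (Function.update f i w k) = 1 := by
  have hne : ∀ j ∈ T, j ≠ i := fun j hj => ne_of_mem_of_not_mem hj hi
  rw [coe_insert, Set.pairwise_insert]
  refine ⟨fun j hj k hk hjk => ?_, fun j hj _ => ?_⟩
  · simp only [Function.update_of_ne (hne j hj), Function.update_of_ne (hne k hk)]
    exact hf hj hk hjk
  · simp only [Function.update_self, Function.update_of_ne (hne j hj), Int.gcd_comm (f j)]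
    exact ⟨hw j hj, hw j hj⟩

theorem exists_pairwise_gcd_eq_one_of_step {ι : Type*} [DecidableEq ι] {N : ℕ}
    (Q : ι → ℤ → Prop) (R : ℤ → Prop) (T : Finset ι) (hT : #T ≤ N)
    (step : ∀ i ∈ T, ∀ s : Finset ℤ, #s < N → (∀ v ∈ s, R v) →
      ∃ w, Q i w ∧ R w ∧ ∀ v ∈ s, Int.gcd w v = 1) :
    ∃ f : ι → ℤ, (∀ i ∈ T, Q i (f i) ∧ R (f i)) ∧
      (T : Set ι).Pairwise fun i j => Int.gcd (f i) (f j) = 1 := by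
  induction T using Finset.induction_on with
  | empty => exact ⟨0, by simp, by simp⟩
  | insert i T hi ih =>
    rw [card_insert_of_notMem hi] at hT
    obtain ⟨f, hfQR, hf⟩ := ih (by omega) fun j hj => step j (mem_insert_of_mem hj)
    obtain ⟨w, hwQ, hwR, hw⟩ := step i (mem_insert_self i T) (T.image f)
      (card_image_le.trans_lt (by omega)) (by simpa using fun j hj => (hfQR j hj).2)
    refine ⟨Function.update f i w, fun j hj => ?_,
      pairwise_gcd_update_insert hi hf fun j hj => hw _ (mem_image_of_mem f hj)⟩
    rcases mem_insert.1 hj with rfl | hj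
    · simpa using ⟨hwQ, hwR⟩
    · simpa [Function.update_of_ne (ne_of_mem_of_not_mem hj hi)] using hfQR j hj

theorem exists_shift_pairwise_coprime {ι : Type*} [Fintype ι] [DecidableEq ι] {n M D H : ℕ}
    (hn : 2 ≤ n) (hι : Fintype.card ι ≤ n) (hD : 2 * (n + 1) * M < D)
    (hHD : H + primorial (32 * n ^ 2) * D < 2 ^ (M + 1)) (a : ι → ℤ) (i₀ : ι)
    (ha : ∀ j ≠ i₀, (a j).natAbs ≤ H) :
    ∃ h : ι → ℤ, (∀ i, 0 ≤ h i ∧ h i < primorial (32 * n ^ 2) * D) ∧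
      Pairwise fun i j => Int.gcd (a i + h i) (a j + h j) = 1 := by
  set T := univ.erase i₀
  have hT : #T < n := by rw [card_erase_of_mem (mem_univ _), card_univ]; omega
  obtain ⟨f, hfQR, hf⟩ := exists_pairwise_gcd_eq_one_of_step
    (fun i w => 0 ≤ w - a i ∧ w - a i < primorial (32 * n ^ 2) * D) (SieveAdmissible n M) T hT.le
    fun i hi s hs hsR => by
      obtain ⟨h, h0, hPD, hdvd, hgood, hcop⟩ :=
        exists_shift_sieveGood_coprime hn hD (a i) s hs.le hsR
      have hai := ha i (ne_of_mem_erase hi)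
      have hbound : (a i + h).natAbs < 2 ^ (M + 1) := by omega
      exact ⟨a i + h, by simpa using ⟨h0, hPD⟩,
        ⟨hdvd, card_primeFactors_le_of_lt_two_pow hbound, hgood⟩, hcop⟩
  obtain ⟨h₀, h₀0, h₀PD, -, -, hcop⟩ := exists_shift_sieveGood_coprime hn hD (a i₀) (T.image f)
    (card_image_le.trans hT.le) (by simpa using fun j hj => (hfQR j hj).2)
  have hpair := pairwise_gcd_update_insert (notMem_erase i₀ univ) hf
    fun j hj => hcop _ (mem_image_of_mem f hj)
  rw [insert_erase (mem_univ _), coe_univ] at hpair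
  refine ⟨fun i => Function.update f i₀ (a i₀ + h₀) i - a i, fun i => ?_,
    fun i j hij => by simpa using hpair (Set.mem_univ i) (Set.mem_univ j) hij⟩
  by_cases hi : i = i₀
  · subst hi; simpa using ⟨h₀0, h₀PD⟩
  · simpa [Function.update_of_ne hi] using (hfQR i (mem_erase.2 ⟨hi, mem_univ i⟩)).1

theorem exists_mul_add_lt_two_pow (a b : ℕ) : ∃ m, a * (b + m) < 2 ^ m := by
  refine ⟨3 * (a + b), ?_⟩
  have h : a + b + 1 ≤ 2 ^ (a + b) := (a + b).lt_two_pow_self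
  calc a * (b + 3 * (a + b)) ≤ 3 * (a + b) ^ 2 := by nlinarith
    _ < (a + b + 1) ^ 3 := by nlinarith
    _ ≤ (2 ^ (a + b)) ^ 3 := by gcongr
    _ = 2 ^ (3 * (a + b)) := by rw [← pow_mul, mul_comm]

theorem mul_add_lt_two_pow_mul {c P m : ℕ} (hP : 0 < P) (hm : c * (P + m) < 2 ^ m) (L : ℕ) :
    c * (P + m + L) < 2 ^ m * (L + 1) :=
  calc c * (P + m + L) ≤ c * (P + m) * (L + 1) := by rw [mul_assoc]; gcongr; nlinarith
    _ < 2 ^ m * (L + 1) := by gcongr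

theorem add_mul_lt_two_pow {P m : ℕ} (hP : 0 < P) (H : ℕ) :
    H + P * (2 ^ m * (Nat.log 2 H + 1)) < 2 ^ (P + m + Nat.log 2 H + 1) := by
  set L := Nat.log 2 H
  have hH : H < 2 ^ (L + 1) := Nat.lt_pow_succ_log_self one_lt_two H
  have hHL : 2 ^ (L + 1) ≤ 2 ^ (P + m + L) := Nat.pow_le_pow_right two_pos (by omega)
  have hPD : P * (2 ^ m * (L + 1)) < 2 ^ (P + m + L) := by
    calc P * (2 ^ m * (L + 1)) < 2 ^ P * (2 ^ m * 2 ^ L) :=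
          Nat.mul_lt_mul_of_lt_of_le P.lt_two_pow_self
            (Nat.mul_le_mul_left _ L.lt_two_pow_self) (by positivity)
      _ = 2 ^ (P + m + L) := by rw [pow_add, pow_add, mul_assoc]
  rw [pow_succ]
  omega

theorem natLog_add_one_le (H : ℕ) : (Nat.log 2 H : ℝ) + 1 ≤ 2 * (1 + Real.log H ^ 2) := by
  have hlog : (Nat.log 2 H : ℝ) ≤ 2 * Real.log H := by
    calc (Nat.log 2 H : ℝ) ≤ Real.logb 2 H := by exact_mod_cast Real.natLog_le_logb H 2
      _ = Real.log H / Real.log 2 := rfl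
      _ ≤ 2 * Real.log H := by
        rw [div_le_iff₀ (Real.log_pos one_lt_two)]
        nlinarith [Real.log_two_gt_d9, Real.log_natCast_nonneg H]
  nlinarith [sq_nonneg (Real.log H - 1)]

theorem exists_forall_ne_natAbs_le_vecHeightStar {n : ℕ} (hn : 0 < n) (a : Fin n → ℤ) :
    ∃ i₀, ∀ j ≠ i₀, (a j).natAbs ≤ vecHeightStar a := by
  obtain ⟨i₀, hi₀⟩ := Nat.sInf_mem (s := Set.range fun i : Fin n => (univ.erase i).sup
    fun j => (a j).natAbs) ⟨_, ⟨⟨0, hn⟩, rfl⟩⟩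
  refine ⟨i₀, fun j hj => ?_⟩
  rw [vecHeightStar, ← hi₀]
  exact le_sup (f := fun j => (a j).natAbs) (mem_erase.2 ⟨hj, mem_univ j⟩)

/-- Refinement of Theorem 2 of the paper: the bound `L(a) ≪ log² 𝔥(a)` holds with
`𝔥(a)` replaced by the smaller quantity `𝔥*(a)`. -/
theorem pairwise_coprime_shift_star (n : ℕ) (hn : 2 ≤ n) :
    ∃ C : ℝ, 0 < C ∧
      ∀ a : Fin n → ℤ, ∃ h : Fin n → ℤ,
        (vecHeight h : ℝ) ≤ C * (1 + (Real.log (vecHeightStar a)) ^ 2) ∧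
        ∀ i j : Fin n, i < j → Int.gcd (a i + h i) (a j + h j) = 1 := by
  have hP := primorial_pos (32 * n ^ 2)
  obtain ⟨m, hm⟩ := exists_mul_add_lt_two_pow (2 * (n + 1)) (primorial (32 * n ^ 2))
  refine ⟨2 * primorial (32 * n ^ 2) * 2 ^ m, by positivity, fun a => ?_⟩
  obtain ⟨i₀, hi₀⟩ := exists_forall_ne_natAbs_le_vecHeightStar (by omega) a
  set H := vecHeightStar a
  obtain ⟨h, hbound, hcop⟩ := exists_shift_pairwise_coprime
    (M := primorial (32 * n ^ 2) + m + Nat.log 2 H) (D := 2 ^ m * (Nat.log 2 H + 1))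
    hn (Fintype.card_fin n).le
    (mul_add_lt_two_pow_mul hP hm (Nat.log 2 H)) (add_mul_lt_two_pow hP H) a i₀ hi₀
  refine ⟨h, ?_, fun i j hij => hcop hij.ne⟩
  have hheight : vecHeight h ≤ primorial (32 * n ^ 2) * (2 ^ m * (Nat.log 2 H + 1)) :=
    Finset.sup_le fun i _ => by have := hbound i; omega
  calc (vecHeight h : ℝ) ≤ primorial (32 * n ^ 2) * 2 ^ m * ((Nat.log 2 H : ℝ) + 1) := by
        rw [mul_assoc]; exact_mod_cast hheight
    _ ≤ primorial (32 * n ^ 2) * 2 ^ m * (2 * (1 + Real.log H ^ 2)) := by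
        gcongr; exact natLog_add_one_le H
    _ = 2 * primorial (32 * n ^ 2) * 2 ^ m * (1 + Real.log H ^ 2) := by ring
end

section
/- For every integer n ≥ 1 there exist a constant c > 0 and infinitely many vectors a ∈ ℤ^n (i.e., for every M there is such an a with 𝔥(a) ≥ M) with the following property: every vector h = (h_1, …, h_n) ∈ ℤ^n with gcd(a_1 + h_1, …, a_n + h_n) = 1 satisfies 𝔥(h) ≥ c · (log 𝔥(a) / log log 𝔥(a))^{1/n}. Equivalently, ℓ(a) ≫ (log 𝔥(a) / log log 𝔥(a))^{1/n} for infinitely many a ∈ ℤ^n. -/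
/-!
Attach to each vector `z` of the box `[-K, K]ⁿ` its own prime `q_z`, and choose `a` by the Chinese
remainder theorem so that `q_z ∣ aᵢ + zᵢ` for all `i`. Then every shift `h` with `𝔥(h) ≤ K` leaves
`gcd(a + h) > 1`. There are `m = (2K + 1)ⁿ` vectors in the box, and Chebyshev's bound
`2^N ≤ (N + 1) · lcm(1, …, N)` provides `m` primes below `16 m²`; hence `2^m ≤ 𝔥(a) ≤ m^(8m)`,
so that `log 𝔥(a) / log log 𝔥(a) ≪ m ≍ Kⁿ`.
-/

open Finset Function
open scoped Nat.Prime

namespace Nat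

theorem lcmUpto_le_pow_primeCounting (n : ℕ) : lcmUpto n ≤ n ^ π n := by
  rcases eq_or_ne n 0 with rfl | hn
  · simp [lcmUpto]
  rw [lcmUpto_eq_prod_pow_log, ← primesLE_card_eq_primeCounting, ← prod_const]
  exact prod_le_prod' fun p _ => pow_log_le_self p hn

theorem le_primeCounting_sixteen_mul_sq (m : ℕ) : m ≤ π (16 * m ^ 2) := by
  set N := 16 * m ^ 2 with hN_def
  by_contra! hlt
  have hm : 0 < m := by omega
  have hchebyshev : 2 ^ N ≤ (N + 1) ^ m := calc
    2 ^ N ≤ (N + 1) * lcmUpto N := Chebyshev.two_pow_le_mul_lcmUpto N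
    _ ≤ (N + 1) * (N + 1) ^ π N := by
      gcongr
      exact (lcmUpto_le_pow_primeCounting N).trans (Nat.pow_le_pow_left N.le_succ _)
    _ = (N + 1) ^ (π N + 1) := (Nat.pow_succ' ..).symm
    _ ≤ (N + 1) ^ m := Nat.pow_le_pow_right N.succ_pos hlt
  have hN : N + 1 ≤ 2 ^ (8 * m) := calc
    N + 1 ≤ (4 * m + 1) ^ 2 := by rw [hN_def]; nlinarith
    _ ≤ (2 ^ (4 * m)) ^ 2 := Nat.pow_le_pow_left Nat.lt_two_pow_self _
    _ = 2 ^ (8 * m) := by rw [← pow_mul]; ring_nf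
  have : (N + 1) ^ m < 2 ^ N := calc
    (N + 1) ^ m ≤ (2 ^ (8 * m)) ^ m := Nat.pow_le_pow_left hN _
    _ = 2 ^ (8 * m * m) := (pow_mul _ _ _).symm
    _ < 2 ^ N := Nat.pow_lt_pow_right (by norm_num) (by rw [hN_def]; nlinarith)
  omega

end Nat

theorem Int.exists_lt_prod_forall_dvd_sub {ι : Type*} (s : Finset ι) (q : ι → ℕ)
    (hq0 : ∀ j ∈ s, q j ≠ 0) (hq : Set.Pairwise s (Nat.Coprime on q)) (r : ι → ℤ) :
    ∃ x : ℕ, x < ∏ j ∈ s, q j ∧ ∀ j ∈ s, (q j : ℤ) ∣ x - r j := by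
  let x := Nat.chineseRemainderOfFinset (fun j => (r j % q j).toNat) q s hq0 hq
  refine ⟨x, Nat.chineseRemainderOfFinset_lt_prod _ _ hq0 hq, fun j hj => ?_⟩
  have hx : (x : ℤ) ≡ (r j % q j).toNat [ZMOD q j] := Int.natCast_modEq_iff.mpr (x.2 j hj)
  rw [Int.toNat_of_nonneg (Int.emod_nonneg _ (by exact_mod_cast hq0 j hj))] at hx
  exact (hx.trans (Int.mod_modEq _ _)).symm.dvd

theorem exists_forall_dvd_add {ι : Type*} {n : ℕ} (s : Finset ι) (q : ι → ℕ)
    (hq0 : ∀ j ∈ s, q j ≠ 0) (hq : Set.Pairwise s (Nat.Coprime on q)) (r : ι → Fin n → ℤ) :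
    ∃ a : Fin n → ℤ, (∀ i, ∏ j ∈ s, (q j : ℤ) ≤ a i ∧ a i < 2 * ∏ j ∈ s, (q j : ℤ)) ∧
      ∀ j ∈ s, ∀ i, (q j : ℤ) ∣ a i + r j i := by
  choose x hxP hx using fun i => Int.exists_lt_prod_forall_dvd_sub s q hq0 hq (-r · i)
  refine ⟨fun i => x i + ∏ j ∈ s, (q j : ℤ), fun i => ?_, fun j hj i => ?_⟩
  · have : (x i : ℤ) < ∏ j ∈ s, (q j : ℤ) := by exact_mod_cast hxP i
    dsimp only
    omega
  · have hdiv := dvd_add (hx i j hj) (dvd_prod_of_mem (fun j => (q j : ℤ)) hj)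
    rwa [sub_neg_eq_add, add_right_comm] at hdiv

theorem natAbs_le_vecHeight {n : ℕ} (x : Fin n → ℤ) (i : Fin n) : (x i).natAbs ≤ vecHeight x :=
  le_sup (f := fun i => (x i).natAbs) (mem_univ i)

theorem vecHeight_le_iff {n K : ℕ} {x : Fin n → ℤ} : vecHeight x ≤ K ↔ ∀ i, (x i).natAbs ≤ K := by
  simp [vecHeight]

noncomputable def intBox (n K : ℕ) : Finset (Fin n → ℤ) :=
  Fintype.piFinset fun _ => Icc (-(K : ℤ)) K

theorem card_intBox (n K : ℕ) : #(intBox n K) = (2 * K + 1) ^ n := by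
  simp only [intBox, Fintype.card_piFinset, Int.card_Icc, prod_const, card_univ, Fintype.card_fin]
  congr 1
  omega

theorem mem_intBox_iff {n K : ℕ} {x : Fin n → ℤ} : x ∈ intBox n K ↔ vecHeight x ≤ K := by
  simp only [intBox, Fintype.mem_piFinset, mem_Icc, vecHeight_le_iff]
  exact forall_congr' fun i => by omega

theorem exists_forall_vecHeight_le_gcd_ne_one {n : ℕ} (hn : 0 < n) (K N : ℕ)
    (hN : (2 * K + 1) ^ n ≤ π N) :
    ∃ a : Fin n → ℤ, 2 ^ (2 * K + 1) ^ n ≤ vecHeight a ∧ vecHeight a ≤ 2 * N ^ (2 * K + 1) ^ n ∧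
      ∀ h : Fin n → ℤ, vecHeight h ≤ K → (univ.gcd fun i => a i + h i) ≠ 1 := by
  have hcard : Fintype.card (intBox n K) ≤ Fintype.card (Nat.primesLE N) := by
    simpa only [Fintype.card_coe, card_intBox, Nat.primesLE_card_eq_primeCounting] using hN
  obtain ⟨e⟩ := Function.Embedding.nonempty_of_card_le hcard
  let q : intBox n K → ℕ := fun z => e z
  have hprime (z) : (q z).Prime := Nat.prime_of_mem_primesLE (e z).2
  have hcop : Set.Pairwise (univ : Finset (intBox n K)) (Nat.Coprime on q) :=
    fun z _ w _ hzw => (Nat.coprime_primes (hprime z) (hprime w)).mpr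
      fun h => hzw (e.injective (Subtype.ext h))
  obtain ⟨a, ha, hdvd⟩ :=
    exists_forall_dvd_add univ q (fun z _ => (hprime z).ne_zero) hcop (fun z => z.1)
  have hcard_univ : #(univ : Finset (intBox n K)) = (2 * K + 1) ^ n := by
    rw [card_univ, Fintype.card_coe, card_intBox]
  set P := ∏ z, q z with hP
  have hP_lo : 2 ^ (2 * K + 1) ^ n ≤ P :=
    hcard_univ ▸ pow_card_le_prod _ _ _ fun z _ => (hprime z).two_le
  have hP_hi : P ≤ N ^ (2 * K + 1) ^ n :=
    hcard_univ ▸ prod_le_pow_card _ _ _ fun z _ => Nat.le_of_mem_primesLE (e z).2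
  have hPcast : ∏ z, (q z : ℤ) = P := by rw [hP, Nat.cast_prod]
  rw [hPcast] at ha
  refine ⟨a, ?_, vecHeight_le_iff.mpr fun i => ?_, fun h hh hgcd => ?_⟩
  · refine le_trans ?_ (natAbs_le_vecHeight a ⟨0, hn⟩)
    have := (ha ⟨0, hn⟩).1
    omega
  · have := ha i
    omega
  · let z : intBox n K := ⟨h, mem_intBox_iff.mpr hh⟩
    have : (q z : ℤ) ∣ 1 := hgcd ▸ dvd_gcd fun i _ => hdvd z (mem_univ z) i
    exact (hprime z).one_lt.ne' (Nat.dvd_one.mp (Int.natCast_dvd_natCast.mp this))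

theorem log_div_log_log_mem_Icc {m H : ℕ} (hm : 4 ≤ m) (hlo : 2 ^ m ≤ H)
    (hhi : H ≤ m ^ (8 * m)) :
    Real.log H / Real.log (Real.log H) ∈ Set.Icc 0 (16 * (m : ℝ)) := by
  have hm' : (4 : ℝ) ≤ m := by exact_mod_cast hm
  have hH : (0 : ℝ) < H := by exact_mod_cast (Nat.two_pow_pos m).trans_le hlo
  have hlog_m : 0 < Real.log m := Real.log_pos (by linarith)
  have hlog_H_lo : (m : ℝ) / 2 ≤ Real.log H := calc
    (m : ℝ) / 2 ≤ m * Real.log 2 := by nlinarith [Real.log_two_gt_d9]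
    _ = Real.log ((2 : ℕ) ^ m : ℕ) := by push_cast; rw [Real.log_pow]
    _ ≤ Real.log H := Real.log_le_log (by positivity) (by exact_mod_cast hlo)
  have hlog_H_hi : Real.log H ≤ 8 * m * Real.log m := calc
    Real.log H ≤ Real.log (m ^ (8 * m) : ℕ) := Real.log_le_log hH (by exact_mod_cast hhi)
    _ = 8 * m * Real.log m := by push_cast; rw [Real.log_pow]; push_cast; ring
  have hloglog_H : Real.log m / 2 ≤ Real.log (Real.log H) := calc
    Real.log m / 2 ≤ Real.log ((m : ℝ) / 2) := by
      have := Real.log_le_log (by positivity) (show (m : ℝ) ≤ (m / 2) ^ 2 by nlinarith)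
      rw [Real.log_pow] at this
      push_cast at this
      linarith
    _ ≤ Real.log (Real.log H) := Real.log_le_log (by positivity) hlog_H_lo
  refine ⟨div_nonneg (by linarith) (by linarith), ?_⟩
  rw [div_le_iff₀ (by linarith)]
  nlinarith

theorem two_mul_sixteen_mul_sq_pow_le {m : ℕ} (hm : 2 ≤ m) : 2 * (16 * m ^ 2) ^ m ≤ m ^ (8 * m) :=
  calc 2 * (16 * m ^ 2) ^ m ≤ 2 ^ m * (16 * m ^ 2) ^ m := by
        gcongr
        exact Nat.le_self_pow (by omega) 2
    _ = (32 * m ^ 2) ^ m := by rw [← mul_pow]; ring_nf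
    _ ≤ (m ^ 6 * m ^ 2) ^ m := by
        gcongr
        calc 32 ≤ 2 ^ 6 := by norm_num
          _ ≤ m ^ 6 := Nat.pow_le_pow_left hm 6
    _ = m ^ (8 * m) := by rw [← pow_add, ← pow_mul]

theorem Real.rpow_one_div_le_of_le_pow {x y : ℝ} {n : ℕ} (hx : 0 ≤ x) (hy : 0 ≤ y) (hn : n ≠ 0)
    (h : x ≤ y ^ n) : x ^ ((1 : ℝ) / n) ≤ y := by
  rwa [one_div, Real.rpow_inv_le_iff_of_pos hx hy (by positivity), Real.rpow_natCast]

/-- Theorem 3 of the paper: for every `n ≥ 1` there exist `c > 0` and infinitely many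
`a ∈ ℤⁿ` such that every `h ∈ ℤⁿ` with `gcd(a₁+h₁, …, aₙ+hₙ) = 1` satisfies
`𝔥(h) ≥ c·(log 𝔥(a) / log log 𝔥(a))^{1/n}`; i.e.
`ℓ(a) ≫ (log 𝔥(a)/log log 𝔥(a))^{1/n}` for infinitely many `a`. -/
theorem ell_lower_bound (n : ℕ) (hn : 1 ≤ n) :
    ∃ c : ℝ, 0 < c ∧
      ∀ M : ℕ, ∃ a : Fin n → ℤ, M ≤ vecHeight a ∧
        ∀ h : Fin n → ℤ, (Finset.univ.gcd fun i => a i + h i) = 1 →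
          c * (Real.log (vecHeight a) / Real.log (Real.log (vecHeight a))) ^ ((1 : ℝ) / n)
            ≤ (vecHeight h : ℝ) := by
  refine ⟨1 / 48, by norm_num, fun M => ?_⟩
  set K := M + 2
  obtain ⟨a, ha_lo, ha_hi, hgcd⟩ := exists_forall_vecHeight_le_gcd_ne_one hn K _
    (Nat.le_primeCounting_sixteen_mul_sq ((2 * K + 1) ^ n))
  set m := (2 * K + 1) ^ n
  have hKm : 2 * K + 1 ≤ m := Nat.le_self_pow (by omega) _
  have hM : M ≤ vecHeight a := by
    have : m < 2 ^ m := Nat.lt_two_pow_self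
    omega
  refine ⟨a, hM, fun h hh => ?_⟩
  have hK : K + 1 ≤ vecHeight h := by
    by_contra! hlt
    exact hgcd h (by omega) hh
  have hK' : (K : ℝ) + 1 ≤ vecHeight h := by exact_mod_cast hK
  obtain ⟨hratio_nonneg, hratio⟩ := log_div_log_log_mem_Icc (by omega) ha_lo
    (ha_hi.trans (two_mul_sixteen_mul_sq_pow_le (by omega)))
  have hm16 : (16 * m : ℝ) ≤ (16 * (2 * K + 1) : ℝ) ^ n := by
    rw [mul_pow]
    gcongr
    · exact le_self_pow₀ (by norm_num) (by omega)
    · exact_mod_cast le_rfl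
  have hroot := Real.rpow_one_div_le_of_le_pow hratio_nonneg (by positivity) (by omega) (hratio.trans hm16)
  linarith
end

section
/- For every integer n ≥ 1 there is a constant C > 0, depending only on n, such that for every sufficiently large integer H there exists a vector a = (a_1, …, a_n) of positive integers with the two properties: (i) for every h = (h_1, …, h_n) ∈ ℤ^n with 𝔥(h) ≤ H one has gcd(a_1 + h_1, …, a_n + h_n) > 1; and (ii) 𝔥(a) ≤ exp(C · H^n · log H). -/
/-! Attach a distinct prime `p_t` to each point `t` of the box `[-H, H]ⁿ` and solve
`a_i ≡ -t_i (mod p_t)` for all `t` by the Chinese remainder theorem, so that `p_h` divides every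
`a_i + h_i` when `𝔥(h) ≤ H`; choosing each `a_i` in the window `(H, H + ∏ p_t]` keeps `a_i + h_i`
positive, hence the gcd nonzero. Chebyshev's bound `2ᴺ ≤ (N + 1)^(π N + 1)` gives `m` primes
below `8m³`, where `m = (2H + 1)ⁿ` is the number of points, so `∏ p_t ≤ (8m³)ᵐ = exp(O(Hⁿ log H))`.
-/

open Finset Function
open scoped Nat.Prime

namespace Nat

theorem two_pow_le_succ_pow_primeCounting_succ (n : ℕ) : 2 ^ n ≤ (n + 1) ^ (π n + 1) :=
  calc 2 ^ n ≤ (n + 1) * lcmUpto n := Chebyshev.two_pow_le_mul_lcmUpto n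
    _ ≤ (n + 1) * (n + 1) ^ π n := by
      gcongr
      exact (lcmUpto_le_pow_primeCounting n).trans (Nat.pow_le_pow_left n.le_succ _)
    _ = (n + 1) ^ (π n + 1) := by ring

theorem le_primeCounting_eight_mul_pow_three (m : ℕ) : m ≤ π (8 * m ^ 3) := by
  by_contra! hm
  have hm1 : 1 ≤ m := by omega
  have hsucc : 8 * m ^ 3 + 1 ≤ 2 ^ (3 * m + 4) :=
    calc 8 * m ^ 3 + 1 ≤ 2 ^ 4 * m ^ 3 := by have := Nat.one_le_pow 3 m hm1; omega
      _ ≤ 2 ^ 4 * (2 ^ m) ^ 3 := by gcongr; exact Nat.lt_two_pow_self.le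
      _ = 2 ^ (3 * m + 4) := by ring
  have hexp : 2 ^ (8 * m ^ 3) ≤ 2 ^ ((3 * m + 4) * m) :=
    calc 2 ^ (8 * m ^ 3) ≤ (8 * m ^ 3 + 1) ^ (π (8 * m ^ 3) + 1) :=
          two_pow_le_succ_pow_primeCounting_succ _
      _ ≤ (8 * m ^ 3 + 1) ^ m := Nat.pow_le_pow_right (by omega) hm
      _ ≤ (2 ^ (3 * m + 4)) ^ m := Nat.pow_le_pow_left hsucc m
      _ = 2 ^ ((3 * m + 4) * m) := (pow_mul _ _ _).symm
  have := (Nat.pow_le_pow_iff_right (by norm_num)).mp hexp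
  nlinarith [Nat.pow_le_pow_right hm1 (by norm_num : 2 ≤ 3)]

end Nat

theorem Int.exists_forall_modEq_of_pairwise_coprime {κ : Type*} [Fintype κ] (m : κ → ℕ)
    (r : κ → ℤ) (hm : ∀ k, m k ≠ 0) (hco : Pairwise (Nat.Coprime on m)) :
    ∃ x : ℤ, ∀ k, x ≡ r k [ZMOD m k] := by
  obtain ⟨x, hx⟩ := Nat.chineseRemainderOfFinset (fun k => (r k % m k).toNat) m univ
    (fun k _ => hm k) (fun k _ l _ hkl => hco hkl)
  refine ⟨x, fun k => ?_⟩
  have hxk := Int.natCast_modEq_iff.mpr (hx k (mem_univ k))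
  rw [Int.toNat_of_nonneg (Int.emod_nonneg _ (by exact_mod_cast hm k))] at hxk
  exact hxk.trans (Int.mod_modEq _ _)

theorem Int.exists_modEq_mem_Ioc (x L : ℤ) {P : ℤ} (hP : 0 < P) :
    ∃ y, y ≡ x [ZMOD P] ∧ L < y ∧ y ≤ L + P :=
  ⟨toIocMod hP L x, Int.modEq_iff_dvd.mpr (Dvd.intro_left _ (self_sub_toIocMod_eq_mul hP L x).symm),
    left_lt_toIocMod hP L x, toIocMod_le_right hP L x⟩

theorem exists_forall_modEq_of_injective_prime {ι κ : Type*} [Fintype κ] (v : κ → ι → ℤ)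
    (p : κ → ℕ) (hp : ∀ k, (p k).Prime) (hinj : p.Injective) (L : ℤ) :
    ∃ a : ι → ℤ, (∀ i, L < a i ∧ a i ≤ L + ∏ k, p k) ∧ ∀ k i, a i ≡ v k i [ZMOD p k] := by
  have hco : Pairwise (Nat.Coprime on p) := fun k l hkl =>
    (Nat.coprime_primes (hp k) (hp l)).mpr (hinj.ne hkl)
  have hP : (0 : ℤ) < ∏ k, p k := by exact_mod_cast prod_pos fun k _ => (hp k).pos
  have coord (i : ι) : ∃ y, (∀ k, y ≡ v k i [ZMOD p k]) ∧ L < y ∧ y ≤ L + ∏ k, p k := by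
    obtain ⟨x, hx⟩ := Int.exists_forall_modEq_of_pairwise_coprime p (v · i)
      (fun k => (hp k).ne_zero) hco
    obtain ⟨y, hyx, hy⟩ := Int.exists_modEq_mem_Ioc x L hP
    refine ⟨y, fun k => ?_, hy⟩
    exact (hyx.of_dvd (by exact_mod_cast dvd_prod_of_mem p (mem_univ k))).trans (hx k)
  choose a ha using coord
  exact ⟨a, fun i => (ha i).2, fun k i => (ha i).1 k⟩

theorem exists_forall_modEq_prime_le {ι κ : Type*} [Fintype κ] (v : κ → ι → ℤ) (L : ℤ) :
    ∃ (a : ι → ℤ) (p : κ → ℕ), (∀ k, (p k).Prime) ∧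
      (∀ i, L < a i ∧ a i ≤ L + ((8 * Fintype.card κ ^ 3) ^ Fintype.card κ : ℕ)) ∧
      ∀ k i, a i ≡ v k i [ZMOD p k] := by
  obtain ⟨e⟩ : Nonempty (κ ↪ Nat.primesLE (8 * Fintype.card κ ^ 3)) :=
    Function.Embedding.nonempty_of_card_le
      (by simpa using Nat.le_primeCounting_eight_mul_pow_three (Fintype.card κ))
  have hp (k : κ) : (e k : ℕ).Prime := Nat.prime_of_mem_primesLE (e k).2
  obtain ⟨a, ha, hmod⟩ := exists_forall_modEq_of_injective_prime v (fun k => e k) hp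
    (Subtype.val_injective.comp e.injective) L
  have hprod : ∏ k, (e k : ℕ) ≤ (8 * Fintype.card κ ^ 3) ^ Fintype.card κ := by
    simpa using prod_le_pow_card univ _ _ fun k _ => Nat.le_of_mem_primesLE (e k).2
  exact ⟨a, _, hp, fun i => ⟨(ha i).1, (ha i).2.trans (by gcongr)⟩, hmod⟩

theorem Finset.one_lt_gcd_of_dvd {ι : Type*} {s : Finset ι} {f : ι → ℤ} {d : ℤ} (hd : 1 < d)
    (hdvd : ∀ i ∈ s, d ∣ f i) {i₀ : ι} (hi₀ : i₀ ∈ s) (hf : f i₀ ≠ 0) : 1 < s.gcd f := by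
  have hne : s.gcd f ≠ 0 := fun h => hf (gcd_eq_zero_iff.mp h i₀ hi₀)
  have hnonneg : 0 ≤ s.gcd f := by
    rw [← normalize_gcd, ← Int.abs_eq_normalize]
    exact abs_nonneg _
  have := Int.le_of_dvd (lt_of_le_of_ne hnonneg hne.symm) (dvd_gcd hdvd)
  omega

theorem mem_piFinset_Icc_of_vecHeight_le {n H : ℕ} {x : Fin n → ℤ} (hx : vecHeight x ≤ H) :
    x ∈ Fintype.piFinset fun _ => Icc (-(H : ℤ)) H := by
  refine Fintype.mem_piFinset.mpr fun i => mem_Icc.mpr ?_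
  have := natAbs_le_vecHeight x i
  omega

theorem add_eight_mul_cube_pow_le {n H m : ℕ} (hH : 8 * 27 ^ n ≤ H) (hm : m ≤ (3 * H) ^ n) :
    H + (8 * m ^ 3) ^ m ≤ H ^ ((3 * n + 2) * 3 ^ n * H ^ n) := by
  have hH2 : 2 ≤ H := le_trans (by have := Nat.one_le_pow n 27 (by norm_num); omega) hH
  have hm' : m ≤ 3 ^ n * H ^ n := by rwa [← mul_pow]
  have hcube : 8 * m ^ 3 ≤ H ^ (3 * n + 1) :=
    calc 8 * m ^ 3 ≤ 8 * (3 ^ n * H ^ n) ^ 3 := by gcongr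
      _ = 8 * 27 ^ n * H ^ (3 * n) := by rw [← mul_pow, ← pow_mul, pow_mul']; ring
      _ ≤ H * H ^ (3 * n) := by gcongr
      _ = H ^ (3 * n + 1) := by ring
  have hpos : 1 ≤ 3 ^ n * H ^ n := Nat.one_le_iff_ne_zero.mpr (by positivity)
  have hpow : (8 * m ^ 3) ^ m ≤ H ^ ((3 * n + 1) * (3 ^ n * H ^ n)) :=
    calc (8 * m ^ 3) ^ m ≤ (H ^ (3 * n + 1)) ^ m := Nat.pow_le_pow_left hcube m
      _ = H ^ ((3 * n + 1) * m) := (pow_mul _ _ _).symm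
      _ ≤ H ^ ((3 * n + 1) * (3 ^ n * H ^ n)) := Nat.pow_le_pow_right (by omega) (by gcongr)
  calc H + (8 * m ^ 3) ^ m
      ≤ H ^ ((3 * n + 1) * (3 ^ n * H ^ n)) + H ^ ((3 * n + 1) * (3 ^ n * H ^ n)) :=
        add_le_add (Nat.le_self_pow (by positivity) H) hpow
    _ ≤ H * H ^ ((3 * n + 1) * (3 ^ n * H ^ n)) := by rw [← two_mul]; gcongr
    _ = H ^ ((3 * n + 1) * (3 ^ n * H ^ n) + 1) := by ring
    _ ≤ H ^ ((3 * n + 2) * 3 ^ n * H ^ n) := Nat.pow_le_pow_right (by omega) (by nlinarith)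

/-- Explicit form of Theorem 3 of the paper: for every `n ≥ 1` there is `C > 0`
(depending only on `n`) such that for every sufficiently large integer `H` there is
a vector `a` of positive integers with: (i) for every `h ∈ ℤⁿ` with `𝔥(h) ≤ H` one
has `gcd(a₁+h₁, …, aₙ+hₙ) > 1`; and (ii) `𝔥(a) ≤ exp(C·Hⁿ·log H)`. -/
theorem crt_construction (n : ℕ) (hn : 1 ≤ n) :
    ∃ C : ℝ, 0 < C ∧ ∃ H₀ : ℕ, ∀ H : ℕ, H₀ ≤ H →
      ∃ a : Fin n → ℤ, (∀ i, 0 < a i) ∧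
        (∀ h : Fin n → ℤ, vecHeight h ≤ H →
          1 < Finset.univ.gcd fun i => a i + h i) ∧
        (vecHeight a : ℝ) ≤ Real.exp (C * (H : ℝ) ^ n * Real.log H) := by
  refine ⟨(3 * n + 2) * 3 ^ n, by positivity, 8 * 27 ^ n, fun H hH => ?_⟩
  have hH0 : 0 < H := lt_of_lt_of_le (by positivity) hH
  set T := Fintype.piFinset fun _ : Fin n => Icc (-(H : ℤ)) H
  have hT : #T ≤ (3 * H) ^ n := by
    simp only [T, Fintype.card_piFinset, Int.card_Icc, prod_const, card_univ,
      Fintype.card_fin]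
    exact Nat.pow_le_pow_left (by omega) n
  obtain ⟨a, p, hp, ha, hmod⟩ :=
    exists_forall_modEq_prime_le (fun (t : T) i => -(t : Fin n → ℤ) i) (H : ℤ)
  rw [Fintype.card_coe] at ha
  refine ⟨a, fun i => by have := (ha i).1; omega, fun h hh => ?_, ?_⟩
  · have hhT : h ∈ T := mem_piFinset_Icc_of_vecHeight_le hh
    have hi₀ := natAbs_le_vecHeight h ⟨0, hn⟩
    refine one_lt_gcd_of_dvd (d := p ⟨h, hhT⟩) ?_ (fun i _ => ?_) (mem_univ ⟨0, hn⟩) ?_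
    · exact_mod_cast (hp ⟨h, hhT⟩).one_lt
    · simpa using (hmod ⟨h, hhT⟩ i).symm.dvd
    · have := (ha ⟨0, hn⟩).1
      omega
  · have hheight : vecHeight a ≤ H + (8 * #T ^ 3) ^ #T :=
      Finset.sup_le fun i _ => by have := ha i; omega
    have hbound := hheight.trans (add_eight_mul_cube_pow_le hH hT)
    calc (vecHeight a : ℝ) ≤ (H : ℝ) ^ ((3 * n + 2) * 3 ^ n * H ^ n) := by exact_mod_cast hbound
      _ = Real.exp ((3 * n + 2) * 3 ^ n * (H : ℝ) ^ n * Real.log H) := by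
        rw [← Real.rpow_natCast, Real.rpow_def_of_pos (by exact_mod_cast hH0)]
        push_cast
        congr 1
        ring
end

section
/- Let n ≥ 2 be an integer. There is a constant C > 0, depending only on n, such that for every vector a = (a_1, …, a_n) of positive integers with gcd(a_1, …, a_n) = 1 and every integer h ≥ 2: |Σ_{1 ≤ d ≤ 2h/(3n)} μ(d) · U_d(a, h)² − ζ(2)^{−1} h^{2n}| ≤ C · h^{2n−1} · log h. -/
/-- `U_d(a, h)`: the number of vectors `x ∈ ℤⁿ` with positive components and height
at most `h` for which `d ∣ a·x`. -/
noncomputable def Ucount {n : ℕ} (a : Fin n → ℤ) (h d : ℕ) : ℕ :=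
  Nat.card {x : Fin n → ℤ //
    (∀ i, 0 < x i) ∧ vecHeight x ≤ h ∧ (d : ℤ) ∣ ∑ i, a i * x i}

open Finset ArithmeticFunction

/-! Reducing modulo `d`, the box `(0, h]ⁿ` lies between two cubes whose sides are multiples of
`d`, and on such a cube every residue vector occurs equally often. Since `gcd a = 1`, the form
`x ↦ a·x` is onto `ℤ/d`, so exactly a `1/d` proportion of residue vectors are zeros of it. Hence
`d·U_d(a, h)` lies between `(d⌊h/d⌋)ⁿ` and `(d(⌊h/d⌋ + 1))ⁿ`, as does `hⁿ`, and
`U_d(a, h)² = h²ⁿ/d² + O(h²ⁿ⁻¹/d)`. Summing the error against `μ(d)` costs a harmonic sum, i.e.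
`O(h²ⁿ⁻¹ log h)`, and the main term `h²ⁿ ∑_{d ≤ m} μ(d)/d²` differs from `h²ⁿ/ζ(2)` by
`O(h²ⁿ/m) = O(h²ⁿ⁻¹)`, because `m = ⌊2h/(3n)⌋` is of size `h/n`. -/

theorem card_dotProduct_eq_zero_mul_card {R ι : Type*} [CommRing R] [Finite R] [Fintype ι]
    (c : ι → R) (hc : ∃ b, c ⬝ᵥ b = 1) :
    Nat.card {r : ι → R // c ⬝ᵥ r = 0} * Nat.card R = Nat.card R ^ Fintype.card ι := by
  let φ : (ι → R) →+ R := AddMonoidHom.mk' (c ⬝ᵥ ·) (dotProduct_add c)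
  have hφ : Function.Surjective φ := fun y => by
    obtain ⟨b, hb⟩ := hc
    exact ⟨y • b, by simp [φ, dotProduct_smul, hb]⟩
  rw [← Nat.card_eq_fintype_card, ← Nat.card_fun, ← φ.ker.card_mul_index, AddSubgroup.index_ker,
    AddMonoidHom.range_eq_top.mpr hφ, AddSubgroup.card_top]
  rfl

theorem card_intCast_dotProduct_eq_zero_mul {ι : Type*} [Fintype ι] (a : ι → ℤ)
    (ha : univ.gcd a = 1) (d : ℕ) [NeZero d] :
    Nat.card {r : ι → ZMod d // (a · : ι → ZMod d) ⬝ᵥ r = 0} * d = d ^ Fintype.card ι := by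
  obtain ⟨g, hg⟩ := univ.gcd_eq_sum_mul a
  have hg' : (a · : ι → ZMod d) ⬝ᵥ (g · : ι → ZMod d) = 1 := by
    simpa [ha, dotProduct] using (congrArg (Int.cast : ℤ → ZMod d) hg).symm
  simpa using card_dotProduct_eq_zero_mul_card _ ⟨_, hg'⟩

theorem card_filter_Ioc_intCast_eq (q d : ℕ) [NeZero d] (c : ZMod d) :
    #{x ∈ Ioc (0 : ℤ) (q * d) | ((x : ℤ) : ZMod d) = c} = q := by
  obtain ⟨v, rfl⟩ := ZMod.intCast_surjective c
  have hd : (0 : ℤ) < d := Nat.cast_pos.mpr (NeZero.pos d)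
  simp_rw [ZMod.intCast_eq_intCast_iff]
  rw [← Nat.cast_inj (R := ℤ), Int.Ioc_filter_modEq_card _ _ hd]
  have hd' : (d : ℚ) ≠ 0 := Nat.cast_ne_zero.mpr (NeZero.ne d)
  have hdq : ((q : ℚ) * d - v) / d = q + (0 - v) / d := by
    field_simp
    ring
  push_cast
  rw [hdq, Int.floor_natCast_add]
  simp

theorem Finset.card_filter_comp_eq_sum_card_fiber {α β : Type*} [DecidableEq β] [Fintype β]
    (s : Finset α) (f : α → β) (p : β → Prop) [DecidablePred p] :
    #{x ∈ s | p (f x)} = ∑ b with p b, #{x ∈ s | f x = b} := by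
  rw [card_eq_sum_card_fiberwise (t := {b | p b}) fun x hx => by
    simpa using (mem_filter.mp hx).2]
  refine sum_congr rfl fun b hb => ?_
  rw [filter_filter]
  refine congrArg card (filter_congr fun x _ => ?_)
  simp only [mem_filter, mem_univ, true_and] at hb
  exact ⟨And.right, fun hx => ⟨hx ▸ hb, hx⟩⟩

theorem card_piFinset_Ioc_filter_intCast_eq {ι : Type*} [Fintype ι] [DecidableEq ι]
    (q d : ℕ) [NeZero d] (r : ι → ZMod d) :
    #{x ∈ Fintype.piFinset fun _ : ι => Ioc (0 : ℤ) (q * d) |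
      (fun i => (x i : ZMod d)) = r} = q ^ Fintype.card ι := by
  have hfibre : {x ∈ Fintype.piFinset fun _ : ι => Ioc (0 : ℤ) (q * d) |
      (fun i => (x i : ZMod d)) = r} =
      Fintype.piFinset fun i => {y ∈ Ioc (0 : ℤ) (q * d) | ((y : ℤ) : ZMod d) = r i} := by
    ext x
    simp [funext_iff, forall_and]
  simp [hfibre, Fintype.card_piFinset, card_filter_Ioc_intCast_eq]

theorem Ucount_eq_card_filter {n : ℕ} (a : Fin n → ℤ) (h d : ℕ) :
    Ucount a h d =
      #{x ∈ Fintype.piFinset fun _ => Ioc (0 : ℤ) h | (d : ℤ) ∣ ∑ i, a i * x i} := by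
  rw [Ucount, ← Nat.card_eq_finsetCard]
  refine Nat.card_congr (Equiv.subtypeEquivRight fun x => ?_)
  simp only [vecHeight, Finset.sup_le_iff, mem_univ, true_imp_iff, mem_filter,
    Fintype.mem_piFinset, mem_Ioc]
  constructor
  · rintro ⟨hpos, hle, hdvd⟩
    exact ⟨fun i => ⟨hpos i, by have := hle i; omega⟩, hdvd⟩
  · rintro ⟨hbox, hdvd⟩
    exact ⟨fun i => (hbox i).1, fun i => by have := hbox i; omega, hdvd⟩

theorem Ucount_mono {n : ℕ} (a : Fin n → ℤ) (d : ℕ) : Monotone fun h => Ucount a h d := by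
  intro h h' hh
  simp only [Ucount_eq_card_filter]
  refine card_le_card (filter_subset_filter _ (Fintype.piFinset_subset _ _ fun _ => ?_))
  exact Ioc_subset_Ioc_right (by exact_mod_cast hh)

theorem mul_Ucount_mul_eq_pow {n : ℕ} (a : Fin n → ℤ) (ha : univ.gcd a = 1) (q d : ℕ)
    [NeZero d] : d * Ucount a (q * d) d = (q * d) ^ n := by
  have hdvd (x : Fin n → ℤ) : (d : ℤ) ∣ ∑ i, a i * x i ↔
      (a · : Fin n → ZMod d) ⬝ᵥ (fun i => (x i : ZMod d)) = 0 := by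
    rw [← ZMod.intCast_zmod_eq_zero_iff_dvd]
    push_cast
    rfl
  have hK := card_intCast_dotProduct_eq_zero_mul a ha d
  rw [Nat.card_eq_fintype_card, Fintype.card_subtype, Fintype.card_fin] at hK
  rw [Ucount_eq_card_filter, Nat.cast_mul]
  simp_rw [hdvd]
  rw [card_filter_comp_eq_sum_card_fiber _ (fun (x : Fin n → ℤ) i => (x i : ZMod d))
    (fun r => (a · : Fin n → ZMod d) ⬝ᵥ r = 0)]
  simp_rw [card_piFinset_Ioc_filter_intCast_eq, sum_const, Fintype.card_fin, smul_eq_mul]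
  rw [← mul_assoc, mul_comm d, hK, mul_pow, mul_comm]

theorem Ucount_bounds {n : ℕ} (a : Fin n → ℤ) (ha : univ.gcd a = 1) (h d : ℕ) [NeZero d] :
    (h / d * d) ^ n ≤ d * Ucount a h d ∧ d * Ucount a h d ≤ ((h / d + 1) * d) ^ n := by
  rw [← mul_Ucount_mul_eq_pow a ha, ← mul_Ucount_mul_eq_pow a ha]
  have hlt : h < (h / d + 1) * d := by
    rw [add_one_mul]
    exact Nat.lt_div_mul_add (NeZero.pos d)
  exact ⟨Nat.mul_le_mul_left d (Ucount_mono a d (Nat.div_mul_le_self h d)),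
    Nat.mul_le_mul_left d (Ucount_mono a d hlt.le)⟩

theorem abs_sq_sub_sq_le_of_mem_Icc {x y a b : ℝ} {n : ℕ} (ha : 0 ≤ a) (hab : a ≤ b)
    (hx : x ∈ Set.Icc (a ^ n) (b ^ n)) (hy : y ∈ Set.Icc (a ^ n) (b ^ n)) :
    |x ^ 2 - y ^ 2| ≤ 2 * n * (b - a) * b ^ (2 * n - 1) := by
  have hb : 0 ≤ b := ha.trans hab
  have hdiff : |x - y| ≤ (b - a) * n * b ^ (n - 1) :=
    calc |x - y| ≤ |b ^ n - a ^ n| :=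
          (abs_sub_le_iff.2 ⟨by linarith [hx.2, hy.1], by linarith [hx.1, hy.2]⟩).trans
            (le_abs_self _)
      _ ≤ |b - a| * n * max |b| |a| ^ (n - 1) := abs_pow_sub_pow_le b a n
      _ = (b - a) * n * b ^ (n - 1) := by
          rw [abs_of_nonneg (sub_nonneg.2 hab), abs_of_nonneg hb, abs_of_nonneg ha,
            max_eq_left hab]
  have hsum : |x + y| ≤ 2 * b ^ n := by
    rw [abs_of_nonneg (by linarith [pow_nonneg ha n, hx.1, hy.1])]
    linarith [hx.2, hy.2]
  calc |x ^ 2 - y ^ 2| = |x - y| * |x + y| := by rw [← abs_mul]; ring_nf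
    _ ≤ (b - a) * n * b ^ (n - 1) * (2 * b ^ n) :=
        mul_le_mul hdiff hsum (abs_nonneg _) (by have := sub_nonneg.2 hab; positivity)
    _ = 2 * n * (b - a) * b ^ (2 * n - 1) := by
        rw [show 2 * n - 1 = (n - 1) + n by omega, pow_add]
        ring

theorem abs_Ucount_sq_sub_le {n : ℕ} (a : Fin n → ℤ) (ha : univ.gcd a = 1) {h d : ℕ}
    (hd : 0 < d) (hdh : d ≤ h) :
    |(Ucount a h d : ℝ) ^ 2 - (h : ℝ) ^ (2 * n) / d ^ 2| ≤
      2 * n * (2 * h) ^ (2 * n - 1) / d := by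
  have : NeZero d := ⟨hd.ne'⟩
  obtain ⟨hlo, hhi⟩ := Ucount_bounds a ha h d
  have hAh : h / d * d ≤ h := Nat.div_mul_le_self h d
  have hhB : h ≤ (h / d + 1) * d := by
    rw [add_one_mul]
    exact (Nat.lt_div_mul_add hd).le
  have hB : (h / d + 1) * d ≤ 2 * h := by rw [add_one_mul]; omega
  have hBA : (((h / d + 1) * d : ℕ) : ℝ) - ((h / d * d : ℕ) : ℝ) = d := by push_cast; ring
  have key := abs_sq_sub_sq_le_of_mem_Icc (x := ((d * Ucount a h d : ℕ) : ℝ))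
    (y := ((h ^ n : ℕ) : ℝ)) (a := ((h / d * d : ℕ) : ℝ)) (b := (((h / d + 1) * d : ℕ) : ℝ))
    (Nat.cast_nonneg _) (by exact_mod_cast hAh.trans hhB)
    ⟨by exact_mod_cast hlo, by exact_mod_cast hhi⟩
    ⟨by exact_mod_cast Nat.pow_le_pow_left hAh n, by exact_mod_cast Nat.pow_le_pow_left hhB n⟩
  rw [hBA] at key
  have hrescale : (Ucount a h d : ℝ) ^ 2 - (h : ℝ) ^ (2 * n) / d ^ 2 =
      (((d * Ucount a h d : ℕ) : ℝ) ^ 2 - ((h ^ n : ℕ) : ℝ) ^ 2) / d ^ 2 := by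
    field_simp
    push_cast
    ring
  calc |(Ucount a h d : ℝ) ^ 2 - (h : ℝ) ^ (2 * n) / d ^ 2|
      = |((d * Ucount a h d : ℕ) : ℝ) ^ 2 - ((h ^ n : ℕ) : ℝ) ^ 2| / d ^ 2 := by
        rw [hrescale, abs_div, abs_of_pos (by positivity : (0 : ℝ) < (d : ℝ) ^ 2)]
    _ ≤ 2 * n * d * (((h / d + 1) * d : ℕ) : ℝ) ^ (2 * n - 1) / d ^ 2 := by gcongr
    _ = 2 * n * (((h / d + 1) * d : ℕ) : ℝ) ^ (2 * n - 1) / d := by field_simp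
    _ ≤ 2 * n * (2 * h) ^ (2 * n - 1) / d := by gcongr; exact_mod_cast hB

theorem sum_Icc_inv_le_one_add_log (m : ℕ) : ∑ d ∈ Icc 1 m, (d : ℝ)⁻¹ ≤ 1 + Real.log m := by
  have := harmonic_le_one_add_log m
  rw [harmonic_eq_sum_Icc] at this
  push_cast at this
  exact this

theorem abs_sum_moebius_mul_Ucount_sq_sub_le {n : ℕ} (a : Fin n → ℤ) (ha : univ.gcd a = 1)
    {h m : ℕ} (hmh : m ≤ h) :
    |∑ d ∈ Icc 1 m, (moebius d : ℝ) * ((Ucount a h d : ℝ) ^ 2 - (h : ℝ) ^ (2 * n) / d ^ 2)| ≤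
      2 * n * (2 * h) ^ (2 * n - 1) * (1 + Real.log h) := by
  have hterm : ∀ d ∈ Icc 1 m,
      |(moebius d : ℝ) * ((Ucount a h d : ℝ) ^ 2 - (h : ℝ) ^ (2 * n) / d ^ 2)| ≤
        2 * n * (2 * h) ^ (2 * n - 1) * (d : ℝ)⁻¹ := by
    intro d hd
    obtain ⟨hd1, hdm⟩ := mem_Icc.1 hd
    rw [abs_mul, ← div_eq_mul_inv]
    have hμ : |(moebius d : ℝ)| ≤ 1 := by exact_mod_cast abs_moebius_le_one
    exact (mul_le_of_le_one_left (abs_nonneg _) hμ).trans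
      (abs_Ucount_sq_sub_le a ha hd1 (hdm.trans hmh))
  calc _ ≤ ∑ d ∈ Icc 1 m, 2 * n * (2 * h) ^ (2 * n - 1) * (d : ℝ)⁻¹ :=
        (abs_sum_le_sum_abs _ _).trans (sum_le_sum hterm)
    _ ≤ ∑ d ∈ Icc 1 h, 2 * n * (2 * h) ^ (2 * n - 1) * (d : ℝ)⁻¹ :=
        sum_le_sum_of_subset_of_nonneg (Icc_subset_Icc_right hmh) fun _ _ _ => by positivity
    _ ≤ 2 * n * (2 * h) ^ (2 * n - 1) * (1 + Real.log h) := by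
        rw [← mul_sum]
        gcongr
        exact sum_Icc_inv_le_one_add_log h

theorem LSeries_moebius_two : LSeries (fun d => (moebius d : ℂ)) 2 = (riemannZeta 2)⁻¹ := by
  have hs : 1 < (2 : ℂ).re := by norm_num
  refine eq_inv_of_mul_eq_one_right (a := riemannZeta 2) ?_
  rw [← LSeries_one_eq_riemannZeta hs]
  exact LSeries_one_mul_Lseries_moebius hs

theorem hasSum_moebius_div_sq :
    HasSum (fun d : ℕ => (moebius d : ℝ) / d ^ 2) (6 / Real.pi ^ 2) := by
  have hs : 1 < (2 : ℂ).re := by norm_num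
  have hL : HasSum (LSeries.term (fun d => (moebius d : ℂ)) 2) _ :=
    (LSeriesSummable_moebius_iff.mpr hs).LSeriesHasSum
  rw [LSeries_moebius_two, riemannZeta_two, inv_div] at hL
  refine Complex.hasSum_ofReal.mp ?_
  convert hL using 1
  · ext d
    rcases eq_or_ne d 0 with rfl | hd
    · simp
    · rw [LSeries.term_of_ne_zero hd, show (2 : ℂ) = (2 : ℕ) by norm_num, Complex.cpow_natCast]
      push_cast
      rfl
  · push_cast
    rfl

theorem abs_sum_Icc_moebius_div_sq_sub_le (m : ℕ) :
    |∑ d ∈ Icc 1 m, (moebius d : ℝ) / d ^ 2 - 6 / Real.pi ^ 2| ≤ 2 / ((m : ℝ) + 1) := by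
  set f : ℕ → ℝ := fun d => (moebius d : ℝ) / d ^ 2
  have hhead : ∑ d ∈ Icc 1 m, f d = ∑ d ∈ range (m + 1), f d := by
    rw [Nat.range_succ_eq_Icc_zero, Icc_eq_cons_Ioc (Nat.zero_le _), sum_cons,
      ← Icc_add_one_left_eq_Ioc, zero_add]
    simp [f]
  have htail (N : ℕ) (hN : m + 1 ≤ N) :
      |∑ d ∈ range N, f d - ∑ d ∈ Icc 1 m, f d| ≤ 2 / ((m : ℝ) + 1) := by
    rw [hhead, ← sum_Ico_eq_sub _ hN, Ico_add_one_left_eq_Ioo]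
    calc |∑ d ∈ Ioo m N, f d| ≤ ∑ d ∈ Ioo m N, ((d : ℝ) ^ 2)⁻¹ := by
          refine (abs_sum_le_sum_abs _ _).trans (sum_le_sum fun d _ => ?_)
          rw [abs_div, abs_of_nonneg (by positivity : (0 : ℝ) ≤ (d : ℝ) ^ 2), div_eq_mul_inv]
          exact mul_le_of_le_one_left (by positivity) (by exact_mod_cast abs_moebius_le_one)
      _ ≤ 2 / ((m : ℝ) + 1) := sum_Ioo_inv_sq_le m N
  rw [abs_sub_comm]
  exact le_of_tendsto ((hasSum_moebius_div_sq.tendsto_sum_nat.sub_const _).abs)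
    (Filter.eventually_atTop.2 ⟨m + 1, htail⟩)

theorem abs_sum_Icc_moebius_div_sq_sub_mul_pow_le {n h m : ℕ} (hn : 0 < n)
    (hm : 2 * (h : ℝ) ≤ 3 * n * (m + 1)) :
    |(∑ d ∈ Icc 1 m, (moebius d : ℝ) / d ^ 2 - 6 / Real.pi ^ 2) * (h : ℝ) ^ (2 * n)| ≤
      3 * n * (h : ℝ) ^ (2 * n - 1) := by
  have hpow : (h : ℝ) ^ (2 * n) = (h : ℝ) ^ (2 * n - 1) * h := by
    rw [← pow_succ]; congr 1; omega
  rw [abs_mul, abs_of_nonneg (by positivity : (0 : ℝ) ≤ (h : ℝ) ^ (2 * n)), hpow, ← mul_assoc]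
  calc |∑ d ∈ Icc 1 m, (moebius d : ℝ) / d ^ 2 - 6 / Real.pi ^ 2| * (h : ℝ) ^ (2 * n - 1) * h
      ≤ 2 / ((m : ℝ) + 1) * (h : ℝ) ^ (2 * n - 1) * h := by
        gcongr
        exact abs_sum_Icc_moebius_div_sq_sub_le m
    _ = 2 * h / ((m : ℝ) + 1) * (h : ℝ) ^ (2 * n - 1) := by ring
    _ ≤ 3 * n * (h : ℝ) ^ (2 * n - 1) := by
        gcongr
        rw [div_le_iff₀ (by positivity)]
        exact hm

theorem abs_sum_Icc_moebius_mul_Ucount_sq_sub_le {n : ℕ} (hn : 0 < n) (a : Fin n → ℤ)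
    (ha : univ.gcd a = 1) {h m : ℕ} (hmh : m ≤ h) (hm : 2 * (h : ℝ) ≤ 3 * n * (m + 1)) :
    |∑ d ∈ Icc 1 m, (moebius d : ℝ) * (Ucount a h d : ℝ) ^ 2
        - 6 / Real.pi ^ 2 * (h : ℝ) ^ (2 * n)| ≤
      2 * n * (2 * h) ^ (2 * n - 1) * (1 + Real.log h) + 3 * n * (h : ℝ) ^ (2 * n - 1) := by
  have hsplit : ∑ d ∈ Icc 1 m, (moebius d : ℝ) * (Ucount a h d : ℝ) ^ 2
        - 6 / Real.pi ^ 2 * (h : ℝ) ^ (2 * n) =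
      ∑ d ∈ Icc 1 m, (moebius d : ℝ) * ((Ucount a h d : ℝ) ^ 2 - (h : ℝ) ^ (2 * n) / d ^ 2)
        + (∑ d ∈ Icc 1 m, (moebius d : ℝ) / d ^ 2 - 6 / Real.pi ^ 2) * (h : ℝ) ^ (2 * n) := by
    simp only [mul_sub, sub_mul, sum_sub_distrib, sum_mul, mul_div_assoc', div_mul_eq_mul_div]
    ring
  rw [hsplit]
  exact (abs_add_le _ _).trans (add_le_add (abs_sum_moebius_mul_Ucount_sq_sub_le a ha hmh)
    (abs_sum_Icc_moebius_div_sq_sub_mul_pow_le hn hm))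

theorem filter_Icc_natCast_le_div_eq_Icc {h b k : ℕ} (hb : b / k ≤ h) :
    (Icc 1 h).filter (fun d : ℕ => (d : ℝ) ≤ b / k) = Icc 1 (b / k) := by
  ext d
  simp only [mem_filter, mem_Icc, ← Nat.le_floor_iff (by positivity : (0 : ℝ) ≤ b / k),
    Nat.floor_div_eq_div]
  omega

/-- The main-term estimate in the proof of Theorem 4: for `n ≥ 2` there is `C > 0`
(depending only on `n`) such that for every vector of positive integers `a` with
`gcd(a₁, …, aₙ) = 1` and every `h ≥ 2`,
`|∑_{1 ≤ d ≤ 2h/(3n)} μ(d)·U_d(a, h)² − ζ(2)⁻¹ h^{2n}| ≤ C·h^{2n−1}·log h`,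
where `ζ(2)⁻¹ = 6/π²`. -/
theorem sum_moebius_Ucount_main (n : ℕ) (hn : 2 ≤ n) :
    ∃ C : ℝ, 0 < C ∧
      ∀ a : Fin n → ℤ, (∀ i, 0 < a i) → Finset.univ.gcd a = 1 →
        ∀ h : ℕ, 2 ≤ h →
        |∑ d ∈ (Finset.Icc 1 h).filter
              (fun d : ℕ => (d : ℝ) ≤ 2 * (h : ℝ) / (3 * n)),
            (ArithmeticFunction.moebius d : ℝ) * (Ucount a h d : ℝ) ^ 2
          - (6 / Real.pi ^ 2) * (h : ℝ) ^ (2 * n)|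
          ≤ C * (h : ℝ) ^ (2 * n - 1) * Real.log h := by
  refine ⟨6 * n * (4 ^ n + 1), by positivity, fun a _ hgcd h hh => ?_⟩
  set m := 2 * h / (3 * n)
  have hmh : m ≤ h := Nat.div_le_of_le_mul (by nlinarith)
  have hm : 2 * (h : ℝ) ≤ 3 * n * (m + 1) := by
    have : 2 * h ≤ m * (3 * n) + 3 * n := (Nat.lt_div_mul_add (by omega)).le
    exact_mod_cast (by linarith : 2 * h ≤ 3 * n * (m + 1))
  have hlog : 1 ≤ 2 * Real.log h := by
    have := Real.log_le_log (by norm_num) (by exact_mod_cast hh : (2 : ℝ) ≤ h)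
    linarith [Real.log_two_gt_d9]
  have hpow : (2 * (h : ℝ)) ^ (2 * n - 1) ≤ 4 ^ n * (h : ℝ) ^ (2 * n - 1) := by
    rw [mul_pow, show (4 : ℝ) ^ n = 2 ^ (2 * n) by rw [pow_mul]; norm_num]
    gcongr <;> norm_num
  have hfilter : (Icc 1 h).filter (fun d : ℕ => (d : ℝ) ≤ 2 * (h : ℝ) / (3 * n)) = Icc 1 m := by
    simpa using filter_Icc_natCast_le_div_eq_Icc (b := 2 * h) (k := 3 * n) hmh
  rw [hfilter]
  calc _ ≤ 2 * n * (2 * h) ^ (2 * n - 1) * (1 + Real.log h) + 3 * n * (h : ℝ) ^ (2 * n - 1) :=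
        abs_sum_Icc_moebius_mul_Ucount_sq_sub_le (by omega) a hgcd hmh hm
    _ ≤ 2 * n * (4 ^ n * (h : ℝ) ^ (2 * n - 1)) * (3 * Real.log h)
        + 3 * n * (h : ℝ) ^ (2 * n - 1) * (2 * Real.log h) := by
        gcongr ?_ + ?_
        · gcongr 2 * n * ?_ * ?_
          linarith
        · exact le_mul_of_one_le_right (by positivity) hlog
    _ = 6 * n * (4 ^ n + 1) * (h : ℝ) ^ (2 * n - 1) * Real.log h := by ring
end
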